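/- arXiv:2210.09160 — 4 statements merged into one kernel-verified Lean document; each statement's English description precedes it below -/
import Mathlib

section
/- Fix p ≥ 1 and a probability measure γ on ℝ with finite p-th moment. The map from ℝ^n to ℝ sending u = (u_1,…,u_n) to W_p(n^{-1} Σ_{i=1}^n δ_{u_i}, γ) is Lipschitz with constant n^{-1/max(2,p)} with respect to the Euclidean norm on ℝ^n. -/
open MeasureTheory ENNReal NNReal

/-- The `p`-Wasserstein distance between two (equal-mass, nonnegative) measures,
defined as the infimum over couplings of the `p`-th transport cost, raised to `1/p`. -/
noncomputable def Wp {E : Type*} [NormedAddCommGroup E] [MeasurableSpace E]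
    (p : ℝ) (μ ν : Measure E) : ℝ≥0∞ :=
  (⨅ π ∈ {π : Measure (E × E) | π.map Prod.fst = μ ∧ π.map Prod.snd = ν},
    ∫⁻ z, (‖z.1 - z.2‖₊ : ℝ≥0∞) ^ p ∂π) ^ (1 / p)



open Finset

section Aux
variable {n : ℕ} {p : ℝ}

lemma meas_cost (p : ℝ) : Measurable fun z : ℝ × ℝ => (‖z.1 - z.2‖₊ : ℝ≥0∞) ^ p :=
  (ENNReal.continuous_rpow_const.measurable).comp (measurable_fst.sub measurable_snd).nnnorm.coe_nnreal_ennreal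

lemma emp_apply (n : ℕ) (u : Fin n → ℝ) (s : Set ℝ) (hs : MeasurableSet s) :
    ((n : ℝ≥0∞)⁻¹ • ∑ i, Measure.dirac (u i)) s
      = (n : ℝ≥0∞)⁻¹ * ∑ i, s.indicator (fun _ => (1:ℝ≥0∞)) (u i) := by
  rw [Measure.smul_apply, Measure.finset_sum_apply, smul_eq_mul]
  congr 1
  exact Finset.sum_congr rfl fun i _ => Measure.dirac_apply' _ hs

lemma emp_univ (n : ℕ) (hn : 0 < n) (u : Fin n → ℝ) :
    ((n : ℝ≥0∞)⁻¹ • ∑ i, Measure.dirac (u i)) Set.univ = 1 := by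
  rw [emp_apply n u _ MeasurableSet.univ]
  simp only [Set.indicator_univ, Finset.sum_const, Finset.card_univ, Fintype.card_fin,
    nsmul_eq_mul, mul_one]
  exact ENNReal.inv_mul_cancel (by exact_mod_cast hn.ne') (by simp)

end Aux

lemma biInf_rpow {α : Type*} (F : α → ℝ≥0∞) (S : Set α) {q : ℝ} (hq : 0 < q) :
    (⨅ x ∈ S, F x) ^ q = ⨅ x ∈ S, F x ^ q := by
  refine le_antisymm (le_iInf₂ fun x hx => ENNReal.rpow_le_rpow (biInf_le _ hx) hq.le) ?_
  have h2 : ((⨅ x ∈ S, F x ^ q) ^ (1/q)) ≤ ⨅ x ∈ S, F x := by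
    refine le_iInf₂ fun x hx => ?_
    calc (⨅ x ∈ S, F x ^ q) ^ (1/q) ≤ (F x ^ q) ^ (1/q) :=
          ENNReal.rpow_le_rpow (biInf_le _ hx) (by positivity)
      _ = F x := by
          rw [← ENNReal.rpow_mul, mul_one_div, div_self hq.ne', ENNReal.rpow_one]
  calc (⨅ x ∈ S, F x) ^ q ≥ (((⨅ x ∈ S, F x ^ q) ^ (1/q)) : ℝ≥0∞) ^ q :=
        ENNReal.rpow_le_rpow h2 hq.le
    _ = ⨅ x ∈ S, F x ^ q := by
        rw [← ENNReal.rpow_mul, one_div, inv_mul_cancel₀ hq.ne', ENNReal.rpow_one]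

lemma wp_triangle (n : ℕ) (hn : 0 < n) (p : ℝ) (hp : 1 ≤ p)
    (γ : Measure ℝ) [IsProbabilityMeasure γ] (u v : Fin n → ℝ) :
    Wp p ((n : ℝ≥0∞)⁻¹ • ∑ i, Measure.dirac (u i)) γ
      ≤ ((n : ℝ≥0∞)⁻¹ * ∑ i, (‖u i - v i‖₊ : ℝ≥0∞) ^ p) ^ (1/p)
        + Wp p ((n : ℝ≥0∞)⁻¹ • ∑ i, Measure.dirac (v i)) γ := by
  classical
  have hp0 : (0:ℝ) < p := lt_of_lt_of_le one_pos hp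
  have h1p : (0:ℝ) < 1/p := by positivity
  have hn0 : ((n:ℝ≥0∞)) ≠ 0 := by exact_mod_cast Nat.cast_ne_zero.mpr hn.ne'
  have hntop : ((n:ℝ≥0∞)) ≠ ⊤ := by simp
  set μu : Measure ℝ := (n : ℝ≥0∞)⁻¹ • ∑ i, Measure.dirac (u i) with hμu
  set μv : Measure ℝ := (n : ℝ≥0∞)⁻¹ • ∑ i, Measure.dirac (v i) with hμv
  set D : ℝ≥0∞ := ((n : ℝ≥0∞)⁻¹ * ∑ i, (‖u i - v i‖₊ : ℝ≥0∞) ^ p) ^ (1/p) with hD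
  set Su : Set (Measure (ℝ × ℝ)) :=
    {π | π.map Prod.fst = μu ∧ π.map Prod.snd = γ} with hSu
  set Sv : Set (Measure (ℝ × ℝ)) :=
    {π | π.map Prod.fst = μv ∧ π.map Prod.snd = γ} with hSv
  have hWv : Wp p μv γ = ⨅ π ∈ Sv, (∫⁻ z, (‖z.1 - z.2‖₊ : ℝ≥0∞) ^ p ∂π) ^ (1/p) :=
    biInf_rpow _ _ h1p
  rw [hWv, ← tsub_le_iff_left]
  refine le_iInf₂ fun π hπ => ?_
  rw [tsub_le_iff_left]
  obtain ⟨hπ1, hπ2⟩ := hπ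
  -- the weight and conditional-measure data of π over the atoms of μv
  set w : ℝ → ℝ≥0∞ := fun a => π ((({a} : Set ℝ)) ×ˢ (Set.univ : Set ℝ)) with hwdef
  have hwm : ∀ a, w a = μv {a} := by
    intro a
    have hset : (Prod.fst ⁻¹' ({a} : Set ℝ) : Set (ℝ×ℝ)) = ({a} : Set ℝ) ×ˢ Set.univ := by
      ext z
      simp only [Set.mem_preimage, Set.singleton_prod, Set.image_univ, Set.mem_range,
        Set.mem_singleton_iff]
      constructor
      · intro h
        exact ⟨z.2, by rw [← h]⟩
      · rintro ⟨y, rfl⟩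
        rfl
    rw [← hπ1, Measure.map_apply measurable_fst (measurableSet_singleton a), hset]
  have hcard : ∀ a, μv {a}
      = (n:ℝ≥0∞)⁻¹ * (Finset.univ.filter (fun i => v i = a)).card := by
    intro a
    rw [hμv, emp_apply n v _ (measurableSet_singleton a)]
    congr 1
    rw [Finset.card_filter]
    push_cast
    refine Finset.sum_congr rfl fun i _ => ?_
    by_cases h : v i = a <;> simp [Set.indicator, h]
  have hμvuniv : μv Set.univ = 1 := by rw [hμv]; exact emp_univ n hn v
  have hwle : ∀ a, w a ≤ 1 := by
    intro a
    rw [hwm a, ← hμvuniv]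
    exact measure_mono (Set.subset_univ _)
  have hwtop : ∀ a, w a ≠ ⊤ := fun a => (lt_of_le_of_lt (hwle a) one_lt_top).ne
  have hwpos : ∀ i, w (v i) ≠ 0 := by
    intro i
    rw [hwm, hcard]
    refine mul_ne_zero (ENNReal.inv_ne_zero.mpr hntop) ?_
    have : i ∈ Finset.univ.filter (fun j => v j = v i) := by simp
    have hcp : 0 < (Finset.univ.filter (fun j => v j = v i)).card := Finset.card_pos.mpr ⟨i, this⟩
    exact_mod_cast Nat.cast_ne_zero.mpr hcp.ne'
  have hcardw : ∀ a, ((Finset.univ.filter (fun i => v i = a)).card : ℝ≥0∞)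
      = (n:ℝ≥0∞) * w a := by
    intro a
    rw [hwm, hcard, ← mul_assoc, ENNReal.mul_inv_cancel hn0 hntop, one_mul]
  set ν : ℝ → Measure ℝ :=
    fun a => (π.restrict (({a} : Set ℝ) ×ˢ Set.univ)).map Prod.snd with hνdef
  have hνuniv : ∀ a, ν a Set.univ = w a := by
    intro a
    rw [hνdef]
    rw [Measure.map_apply measurable_snd MeasurableSet.univ]
    simp only [Set.preimage_univ]
    rw [Measure.restrict_apply MeasurableSet.univ, Set.univ_inter]
  have hνf : ∀ a, IsFiniteMeasure (ν a) := by
    intro a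
    constructor
    rw [hνuniv a]
    exact lt_of_le_of_lt (hwle a) one_lt_top
  have hνE : ∀ (a : ℝ) (E : Set (ℝ×ℝ)), MeasurableSet E →
      ν a {y | (a, y) ∈ E} = π (E ∩ (({a} : Set ℝ) ×ˢ Set.univ)) := by
    intro a E hE
    have hEy : MeasurableSet {y : ℝ | (a, y) ∈ E} := measurable_prodMk_left hE
    rw [hνdef]
    rw [Measure.map_apply measurable_snd hEy, Measure.restrict_apply (measurable_snd hEy)]
    congr 1
    ext ⟨z1, z2⟩
    simp only [Set.mem_inter_iff, Set.mem_preimage, Set.mem_setOf_eq, Set.mem_prod,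
      Set.mem_singleton_iff, Set.mem_univ, and_true]
    constructor
    · rintro ⟨h1, h2⟩
      subst h2
      exact ⟨h1, rfl⟩
    · rintro ⟨h1, h2⟩
      subst h2
      exact ⟨h1, rfl⟩
  set c : Fin n → ℝ≥0∞ := fun i => ((n:ℝ≥0∞) * w (v i))⁻¹ with hcdef
  have hcw : ∀ i, c i * w (v i) = (n:ℝ≥0∞)⁻¹ := by
    intro i
    rw [hcdef]
    simp only []
    rw [ENNReal.mul_inv (Or.inl hn0) (Or.inl hntop), mul_assoc,
        ENNReal.inv_mul_cancel (hwpos i) (hwtop _), mul_one]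
  set ρ : Measure ((ℝ × ℝ) × ℝ) :=
    ∑ i, c i • (Measure.dirac ((u i, v i) : ℝ × ℝ)).prod (ν (v i)) with hρdef
  have hρT : ∀ (T : Set ((ℝ×ℝ)×ℝ)), MeasurableSet T →
      ρ T = ∑ i, c i * ν (v i) {y | ((u i, v i), y) ∈ T} := by
    intro T hT
    rw [hρdef, Measure.finset_sum_apply]
    refine Finset.sum_congr rfl fun i _ => ?_
    haveI := hνf (v i)
    rw [Measure.smul_apply, smul_eq_mul, Measure.prod_apply hT,
        lintegral_dirac' _ (measurable_measure_prodMk_left hT)]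
    rfl
  have hρint : ∀ (F : (ℝ×ℝ)×ℝ → ℝ≥0∞), Measurable F →
      ∫⁻ z, F z ∂ρ
        = ∑ i, c i * ∫⁻ z, F z ∂((Measure.dirac ((u i, v i) : ℝ×ℝ)).prod (ν (v i))) := by
    intro F hF
    rw [hρdef, lintegral_finset_sum_measure]
    exact Finset.sum_congr rfl fun i _ => lintegral_smul_measure _ _
  have hφ : Measurable (fun z : (ℝ×ℝ)×ℝ => (z.1.2, z.2)) :=
    (measurable_fst.snd).prodMk measurable_snd
  have hψ : Measurable (fun z : (ℝ×ℝ)×ℝ => (z.1.1, z.2)) :=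
    (measurable_fst.fst).prodMk measurable_snd
  -- grouping identity
  have hgroup : ∀ (G : ℝ → ℝ≥0∞),
      ∑ i, c i * G (v i) = ∑ a ∈ Finset.univ.image v, G a := by
    intro G
    have hfib := Finset.sum_fiberwise_eq_sum_filter Finset.univ (Finset.univ.image v) v
      (fun i => c i * G (v i))
    have hfilt : Finset.univ.filter (fun i => v i ∈ Finset.univ.image v) = Finset.univ := by
      refine Finset.filter_true_of_mem fun i _ => Finset.mem_image_of_mem v (Finset.mem_univ i)
    rw [hfilt] at hfib
    rw [← hfib]
    refine Finset.sum_congr rfl fun a ha => ?_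
    have hwa : w a ≠ 0 := by
      obtain ⟨i, _, rfl⟩ := Finset.mem_image.mp ha
      exact hwpos i
    have hinner : ∀ i ∈ Finset.univ.filter (fun i => v i = a),
        c i * G (v i) = ((n:ℝ≥0∞) * w a)⁻¹ * G a := by
      intro i hi
      have hvi : v i = a := (Finset.mem_filter.mp hi).2
      rw [hcdef]
      simp only [hvi]
    rw [Finset.sum_congr rfl hinner, Finset.sum_const, nsmul_eq_mul, hcardw a,
        ← mul_assoc, ENNReal.mul_inv_cancel (mul_ne_zero hn0 hwa)
          (ENNReal.mul_ne_top hntop (hwtop a)), one_mul]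
  -- the v-marginal map of ρ recovers π
  have hmapφ : ρ.map (fun z : (ℝ×ℝ)×ℝ => (z.1.2, z.2)) = π := by
    ext s hs
    rw [Measure.map_apply hφ hs, hρT _ (hφ hs)]
    have h2 : ∀ i, ν (v i) {y | ((u i, v i), y) ∈ (fun z : (ℝ×ℝ)×ℝ => (z.1.2, z.2)) ⁻¹' s}
        = π (s ∩ (({v i} : Set ℝ) ×ˢ Set.univ)) := fun i => hνE (v i) s hs
    simp only [Set.mem_preimage] at h2 ⊢
    rw [Finset.sum_congr rfl (fun i _ => by rw [h2 i]),
        hgroup (fun a => π (s ∩ (({a} : Set ℝ) ×ˢ Set.univ)))]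
    -- sum over distinct atoms is the measure of s
    have hdisj : (↑(Finset.univ.image v) : Set ℝ).PairwiseDisjoint
        (fun a => s ∩ (({a} : Set ℝ) ×ˢ Set.univ)) := by
      intro a _ b _ hab
      refine Set.disjoint_left.mpr fun z hz1 hz2 => hab ?_
      have h1 : z.1 = a := hz1.2.1
      have h2 : z.1 = b := hz2.2.1
      rw [← h1, h2]
    have hmeas : ∀ a ∈ Finset.univ.image v,
        MeasurableSet (s ∩ (({a} : Set ℝ) ×ˢ Set.univ)) :=
      fun a _ => hs.inter ((measurableSet_singleton a).prod MeasurableSet.univ)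
    rw [← measure_biUnion_finset hdisj hmeas]
    have hU : (⋃ a ∈ Finset.univ.image v, s ∩ (({a} : Set ℝ) ×ˢ Set.univ))
        = s ∩ ((↑(Finset.univ.image v) : Set ℝ) ×ˢ Set.univ) := by
      ext z
      simp only [Set.mem_iUnion, Set.mem_inter_iff, Set.mem_prod, Set.mem_singleton_iff,
        Set.mem_univ, and_true, Finset.mem_coe]
      constructor
      · rintro ⟨a, ha, hzs, hz1⟩
        exact ⟨hzs, hz1 ▸ ha⟩
      · rintro ⟨hzs, hz1⟩
        exact ⟨z.1, hz1, hzs, rfl⟩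
    rw [hU]
    -- π-null complement
    have hT : MeasurableSet ((↑(Finset.univ.image v) : Set ℝ) ×ˢ (Set.univ : Set ℝ)) :=
      ((Finset.univ.image v).measurableSet).prod MeasurableSet.univ
    have hnull : π (((↑(Finset.univ.image v) : Set ℝ) ×ˢ (Set.univ : Set ℝ))ᶜ) = 0 := by
      have hco : (((↑(Finset.univ.image v) : Set ℝ)) ×ˢ (Set.univ : Set ℝ))ᶜ
          = Prod.fst ⁻¹' ((↑(Finset.univ.image v) : Set ℝ)ᶜ) := by
        ext z
        simp [Set.mem_prod]
      rw [hco, ← Measure.map_apply measurable_fst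
        ((Finset.univ.image v).measurableSet.compl), hπ1, hμv,
        emp_apply n v _ ((Finset.univ.image v).measurableSet.compl)]
      have : ∀ i : Fin n, ((↑(Finset.univ.image v) : Set ℝ)ᶜ).indicator
          (fun _ => (1:ℝ≥0∞)) (v i) = 0 := by
        intro i
        refine Set.indicator_of_notMem ?_ _
        simp only [Set.mem_compl_iff, Finset.mem_coe, not_not]
        exact Finset.mem_image_of_mem v (Finset.mem_univ i)
      rw [Finset.sum_congr rfl (fun i _ => this i), Finset.sum_const_zero, mul_zero]
    have := measure_inter_add_diff (μ := π) s hT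
    have hdiff : π (s \ ((↑(Finset.univ.image v) : Set ℝ) ×ˢ Set.univ)) = 0 :=
      le_antisymm (le_trans (measure_mono (Set.diff_subset_compl _ _)) hnull.le) zero_le
    rw [← this, hdiff, add_zero]
  -- the new coupling and its marginals
  have hπ'1 : (ρ.map (fun z : (ℝ×ℝ)×ℝ => (z.1.1, z.2))).map Prod.fst = μu := by
    ext s hs
    rw [Measure.map_apply measurable_fst hs, Measure.map_apply hψ (measurable_fst hs),
        hρT _ (hψ (measurable_fst hs))]
    have h1 : ∀ i, ν (v i) {y : ℝ | ((u i, v i), y)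
          ∈ (fun z : (ℝ×ℝ)×ℝ => (z.1.1, z.2)) ⁻¹' (Prod.fst ⁻¹' s)}
        = s.indicator (fun _ => (1:ℝ≥0∞)) (u i) * w (v i) := by
      intro i
      by_cases h : u i ∈ s
      · have he : {y : ℝ | ((u i, v i), y)
            ∈ (fun z : (ℝ×ℝ)×ℝ => (z.1.1, z.2)) ⁻¹' (Prod.fst ⁻¹' s)} = Set.univ := by
          ext y; simp [h]
        rw [he, hνuniv, Set.indicator_of_mem h, one_mul]
      · have he : {y : ℝ | ((u i, v i), y)
            ∈ (fun z : (ℝ×ℝ)×ℝ => (z.1.1, z.2)) ⁻¹' (Prod.fst ⁻¹' s)} = ∅ := by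
          ext y; simp [h]
        rw [he, measure_empty, Set.indicator_of_notMem h, zero_mul]
    rw [Finset.sum_congr rfl (fun i _ => by rw [h1 i]), hμu, emp_apply n u s hs,
        Finset.mul_sum]
    refine Finset.sum_congr rfl fun i _ => ?_
    rw [mul_comm (c i), mul_assoc, mul_comm (w (v i)) (c i), hcw i, mul_comm]
  have hπ'2 : (ρ.map (fun z : (ℝ×ℝ)×ℝ => (z.1.1, z.2))).map Prod.snd = γ := by
    have e1 : (ρ.map (fun z : (ℝ×ℝ)×ℝ => (z.1.1, z.2))).map Prod.snd
        = ρ.map (fun z : (ℝ×ℝ)×ℝ => z.2) := by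
      rw [Measure.map_map measurable_snd hψ]; rfl
    have e2 : (ρ.map (fun z : (ℝ×ℝ)×ℝ => (z.1.2, z.2))).map Prod.snd
        = ρ.map (fun z : (ℝ×ℝ)×ℝ => z.2) := by
      rw [Measure.map_map measurable_snd hφ]; rfl
    rw [e1, ← e2, hmapφ, hπ2]
  -- cost estimates
  have hcost' : ∫⁻ z, (‖z.1 - z.2‖₊ : ℝ≥0∞) ^ p ∂(ρ.map (fun z : (ℝ×ℝ)×ℝ => (z.1.1, z.2)))
      = ∫⁻ z, (‖z.1.1 - z.2‖₊ : ℝ≥0∞) ^ p ∂ρ :=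
    lintegral_map (meas_cost p) hψ
  set f : (ℝ×ℝ)×ℝ → ℝ≥0∞ := fun z => (‖z.1.1 - z.1.2‖₊ : ℝ≥0∞) with hfdef
  set g : (ℝ×ℝ)×ℝ → ℝ≥0∞ := fun z => (‖z.1.2 - z.2‖₊ : ℝ≥0∞) with hgdef
  have hfm : Measurable f := (measurable_fst.fst.sub measurable_fst.snd).nnnorm.coe_nnreal_ennreal
  have hgm : Measurable g := (measurable_fst.snd.sub measurable_snd).nnnorm.coe_nnreal_ennreal
  have htri : ∫⁻ z, (‖z.1.1 - z.2‖₊:ℝ≥0∞)^p ∂ρ ≤ ∫⁻ z, (f z + g z)^p ∂ρ := by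
    refine lintegral_mono fun z => ENNReal.rpow_le_rpow ?_ hp0.le
    calc (‖z.1.1 - z.2‖₊:ℝ≥0∞) = edist z.1.1 z.2 := (edist_eq_enorm_sub _ _).symm
      _ ≤ edist z.1.1 z.1.2 + edist z.1.2 z.2 := edist_triangle _ _ _
      _ = f z + g z := by
          rw [edist_eq_enorm_sub, edist_eq_enorm_sub]; rfl
  have hLp := ENNReal.lintegral_Lp_add_le (μ := ρ) hfm.aemeasurable hgm.aemeasurable hp
  have hfint : ∫⁻ z, f z ^ p ∂ρ = (n:ℝ≥0∞)⁻¹ * ∑ i, (‖u i - v i‖₊:ℝ≥0∞)^p := by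
    have hFm : Measurable (fun z : (ℝ×ℝ)×ℝ => f z ^ p) :=
      (ENNReal.continuous_rpow_const.measurable).comp hfm
    rw [hρint _ hFm]
    have hper : ∀ i, ∫⁻ z, f z ^ p ∂((Measure.dirac ((u i, v i) : ℝ×ℝ)).prod (ν (v i)))
        = (‖u i - v i‖₊:ℝ≥0∞)^p * w (v i) := by
      intro i
      haveI := hνf (v i)
      calc ∫⁻ z, f z ^ p ∂((Measure.dirac ((u i, v i) : ℝ×ℝ)).prod (ν (v i)))
          = ∫⁻ x, (‖x.1 - x.2‖₊:ℝ≥0∞)^p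
              ∂(Measure.map Prod.fst ((Measure.dirac ((u i, v i) : ℝ×ℝ)).prod (ν (v i)))) :=
            (lintegral_map (meas_cost p) measurable_fst).symm
        _ = (‖u i - v i‖₊:ℝ≥0∞)^p * w (v i) := by
            rw [Measure.map_fst_prod, hνuniv, lintegral_smul_measure,
              lintegral_dirac' _ (meas_cost p), mul_comm, smul_eq_mul]
    rw [Finset.sum_congr rfl (fun i _ => by rw [hper i]), Finset.mul_sum]
    refine Finset.sum_congr rfl fun i _ => ?_
    rw [mul_comm ((‖u i - v i‖₊:ℝ≥0∞)^p) (w (v i)), ← mul_assoc, hcw i]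
  have hgint : ∫⁻ z, g z ^ p ∂ρ = ∫⁻ z, (‖z.1 - z.2‖₊:ℝ≥0∞)^p ∂π := by
    rw [← hmapφ, lintegral_map (meas_cost p) hφ]
  have hmem : ρ.map (fun z : (ℝ×ℝ)×ℝ => (z.1.1, z.2)) ∈ Su := ⟨hπ'1, hπ'2⟩
  have step1 : Wp p μu γ ≤ (∫⁻ z, (‖z.1 - z.2‖₊:ℝ≥0∞)^p
      ∂(ρ.map (fun z : (ℝ×ℝ)×ℝ => (z.1.1, z.2)))) ^ (1/p) :=
    ENNReal.rpow_le_rpow (biInf_le _ hmem) h1p.le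
  refine step1.trans ?_
  rw [hcost']
  calc (∫⁻ z, (‖z.1.1 - z.2‖₊:ℝ≥0∞)^p ∂ρ) ^ (1/p)
      ≤ (∫⁻ z, (f z + g z)^p ∂ρ) ^ (1/p) := ENNReal.rpow_le_rpow htri h1p.le
    _ ≤ (∫⁻ z, f z ^p ∂ρ)^(1/p) + (∫⁻ z, g z^p ∂ρ)^(1/p) := hLp
    _ = D + (∫⁻ z, (‖z.1-z.2‖₊:ℝ≥0∞)^p ∂π)^(1/p) := by rw [hfint, hgint]

lemma wp_ne_top (n : ℕ) (hn : 0 < n) (p : ℝ) (hp : 1 ≤ p) (γ : Measure ℝ)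
    [IsProbabilityMeasure γ] (hmom : ∫⁻ x, (‖x‖₊ : ℝ≥0∞) ^ p ∂γ ≠ ⊤) (u : Fin n → ℝ) :
    Wp p ((n : ℝ≥0∞)⁻¹ • ∑ i, Measure.dirac (u i)) γ ≠ ⊤ := by
  have hp0 : (0:ℝ) < p := lt_of_lt_of_le one_pos hp
  set μu : Measure ℝ := (n : ℝ≥0∞)⁻¹ • ∑ i, Measure.dirac (u i) with hμu
  haveI : IsFiniteMeasure μu := ⟨by rw [hμu, emp_univ n hn u]; exact one_lt_top⟩
  have hμuuniv : μu Set.univ = 1 := by rw [hμu]; exact emp_univ n hn u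
  have hmem : μu.prod γ ∈ {π : Measure (ℝ × ℝ) |
      π.map Prod.fst = μu ∧ π.map Prod.snd = γ} := by
    constructor
    · rw [Measure.map_fst_prod, measure_univ, one_smul]
    · rw [Measure.map_snd_prod, hμuuniv, one_smul]
  have hcost : ∫⁻ z, (‖z.1 - z.2‖₊ : ℝ≥0∞) ^ p ∂(μu.prod γ) ≠ ⊤ := by
    have hcm : ∀ x : ℝ, Measurable fun y : ℝ => (‖x - y‖₊ : ℝ≥0∞) ^ p := fun x =>
      (ENNReal.continuous_rpow_const.measurable).comp (measurable_const.sub measurable_id).nnnorm.coe_nnreal_ennreal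
    have h2top : ((2:ℝ≥0∞) ^ (p-1)) ≠ ⊤ :=
      ENNReal.rpow_ne_top_of_nonneg (by linarith) (by simp)
    have hxt : ∀ x : ℝ, ((‖x‖₊ : ℝ≥0∞)) ^ p ≠ ⊤ :=
      fun x => ENNReal.rpow_ne_top_of_nonneg hp0.le ENNReal.coe_ne_top
    have hbound : ∀ x : ℝ, ∫⁻ y, (‖x - y‖₊ : ℝ≥0∞) ^ p ∂γ ≠ ⊤ := by
      intro x
      have hle : ∫⁻ y, (‖x - y‖₊ : ℝ≥0∞) ^ p ∂γ
          ≤ ∫⁻ y, (2:ℝ≥0∞) ^ (p-1) * ((‖x‖₊ : ℝ≥0∞) ^ p + (‖y‖₊ : ℝ≥0∞) ^ p) ∂γ := by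
        refine lintegral_mono fun y => ?_
        calc (‖x - y‖₊ : ℝ≥0∞) ^ p ≤ ((‖x‖₊ : ℝ≥0∞) + (‖y‖₊ : ℝ≥0∞)) ^ p := by
              refine ENNReal.rpow_le_rpow ?_ hp0.le
              exact_mod_cast nnnorm_sub_le x y
          _ ≤ (2:ℝ≥0∞) ^ (p-1) * ((‖x‖₊ : ℝ≥0∞) ^ p + (‖y‖₊ : ℝ≥0∞) ^ p) :=
              ENNReal.rpow_add_le_mul_rpow_add_rpow _ _ hp
      refine (lt_of_le_of_lt hle ?_).ne
      rw [lintegral_const_mul _ (by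
        exact (measurable_const.add
          ((ENNReal.continuous_rpow_const.measurable).comp measurable_nnnorm.coe_nnreal_ennreal)))]
      rw [lintegral_add_left measurable_const]
      refine ENNReal.mul_lt_top h2top.lt_top ?_
      rw [lintegral_const, measure_univ, mul_one]
      exact ENNReal.add_lt_top.mpr ⟨(hxt x).lt_top, hmom.lt_top⟩
    have hfm : Measurable fun z : ℝ × ℝ => (‖z.1 - z.2‖₊ : ℝ≥0∞) ^ p := meas_cost p
    rw [lintegral_prod _ hfm.aemeasurable]
    have : ∫⁻ x, ∫⁻ y, (‖x - y‖₊ : ℝ≥0∞) ^ p ∂γ ∂μu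
        = (n:ℝ≥0∞)⁻¹ * ∑ i, ∫⁻ y, (‖u i - y‖₊ : ℝ≥0∞) ^ p ∂γ := by
      rw [hμu, lintegral_smul_measure, lintegral_finset_sum_measure]
      congr 1
      refine Finset.sum_congr rfl fun i _ => ?_
      exact lintegral_dirac' _ (Measurable.lintegral_prod_right hfm)
    rw [this]
    refine ENNReal.mul_ne_top (by simp [hn.ne']) ?_
    exact (ENNReal.sum_lt_top.mpr fun i _ => (hbound (u i)).lt_top).ne
  have hinf : (⨅ π ∈ {π : Measure (ℝ × ℝ) | π.map Prod.fst = μu ∧ π.map Prod.snd = γ},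
      ∫⁻ z, (‖z.1 - z.2‖₊ : ℝ≥0∞) ^ p ∂π) ≠ ⊤ :=
    fun h => hcost (top_le_iff.mp (h ▸ biInf_le _ hmem))
  exact ENNReal.rpow_ne_top_of_nonneg (by positivity) hinf

lemma sum_rpow_le_rpow_sum' {ι : Type*} (s : Finset ι) (f : ι → ℝ≥0) {r : ℝ} (hr : 1 ≤ r) :
    ∑ i ∈ s, f i ^ r ≤ (∑ i ∈ s, f i) ^ r := by
  induction s using Finset.cons_induction with
  | empty => simp [NNReal.zero_rpow (by positivity : r ≠ 0)]
  | cons a s ha ih =>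
    simp only [Finset.sum_cons]
    calc f a ^ r + ∑ i ∈ s, f i ^ r ≤ f a ^ r + (∑ i ∈ s, f i) ^ r := by gcongr
      _ ≤ (f a + ∑ i ∈ s, f i) ^ r := NNReal.add_rpow_le_rpow_add _ _ hr

lemma pm_ineq (n : ℕ) (hn : 0 < n) {p : ℝ} (hp : 1 ≤ p) (a : Fin n → ℝ≥0) :
    ((n : ℝ≥0)⁻¹ * ∑ i, a i ^ p) ^ (1/p)
      ≤ (n : ℝ≥0) ^ (-(1 / max 2 p)) * (∑ i, a i ^ (2:ℝ)) ^ (2⁻¹ : ℝ) := by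
  have hp0 : (0:ℝ) < p := lt_of_lt_of_le one_pos hp
  have hN : (0:ℝ≥0) < (n:ℝ≥0) := by exact_mod_cast hn
  rcases le_total p 2 with h2 | h2
  · rw [max_eq_left h2]
    have hw : ∑ _i : Fin n, (n:ℝ≥0)⁻¹ = 1 := by
      simp [Finset.sum_const, Finset.card_univ]
      exact mul_inv_cancel₀ hN.ne'
    have key := NNReal.arith_mean_le_rpow_mean Finset.univ (fun _ => (n:ℝ≥0)⁻¹)
      (fun i => a i ^ p) hw (p := 2/p) (by rw [le_div_iff₀ hp0]; linarith)
    have hz : ∀ i : Fin n, (a i ^ p) ^ (2/p : ℝ) = a i ^ (2:ℝ) := by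
      intro i; rw [← NNReal.rpow_mul]; congr 1; field_simp
    simp only [hz] at key
    rw [← Finset.mul_sum, ← Finset.mul_sum, one_div_div] at key
    have key2 := NNReal.rpow_le_rpow key (by positivity : (0:ℝ) ≤ 1/p)
    refine key2.trans_eq ?_
    rw [← NNReal.rpow_mul]
    have h12 : p/2 * (1/p) = 2⁻¹ := by field_simp
    rw [h12, NNReal.mul_rpow, NNReal.inv_rpow, ← NNReal.rpow_neg]
    norm_num
  · rw [max_eq_right h2]
    have hr : (1:ℝ) ≤ p/2 := by linarith
    have hsum : ∑ i, a i ^ p ≤ (∑ i, a i ^ (2:ℝ)) ^ (p/2) := by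
      calc ∑ i, a i ^ p = ∑ i, (a i ^ (2:ℝ)) ^ (p/2 : ℝ) := by
            refine Finset.sum_congr rfl fun i _ => ?_
            rw [← NNReal.rpow_mul]; congr 1; field_simp
        _ ≤ _ := sum_rpow_le_rpow_sum' _ _ hr
    have key : ((n:ℝ≥0)⁻¹ * ∑ i, a i ^ p) ^ (1/p)
        ≤ ((n:ℝ≥0)⁻¹ * (∑ i, a i ^ (2:ℝ)) ^ (p/2)) ^ (1/p) :=
      NNReal.rpow_le_rpow (by gcongr) (by positivity)
    refine key.trans_eq ?_
    rw [NNReal.mul_rpow, NNReal.inv_rpow, ← NNReal.rpow_neg, ← NNReal.rpow_mul]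
    have h12 : p/2 * (1/p) = 2⁻¹ := by field_simp
    rw [h12]

/-- For `p ≥ 1` and a probability measure `γ` on `ℝ` with finite `p`-th moment, the map
`u = (u_1,…,u_n) ↦ W_p(n⁻¹ Σ_i δ_{u_i}, γ)` is `n^{-1/max(2,p)}`-Lipschitz with respect
to the Euclidean norm on `ℝ^n`. -/
theorem stmt5 (n : ℕ) (hn : 0 < n) (p : ℝ) (hp : 1 ≤ p)
    (γ : Measure ℝ) [IsProbabilityMeasure γ]
    (hmom : ∫⁻ x, (‖x‖₊ : ℝ≥0∞) ^ p ∂γ ≠ ⊤) :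
    LipschitzWith ((n : ℝ≥0) ^ (-(1 / max 2 p)))
      (fun u : EuclideanSpace ℝ (Fin n) =>
        (Wp p ((n : ℝ≥0∞)⁻¹ • ∑ i, Measure.dirac (u i)) γ).toReal) := by
  have hp0 : (0:ℝ) < p := lt_of_lt_of_le one_pos hp
  refine LipschitzWith.of_dist_le_mul fun x y => ?_
  set A : ℝ≥0∞ := Wp p ((n : ℝ≥0∞)⁻¹ • ∑ i, Measure.dirac (x i)) γ with hA
  set B : ℝ≥0∞ := Wp p ((n : ℝ≥0∞)⁻¹ • ∑ i, Measure.dirac (y i)) γ with hB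
  set E : ℝ≥0 := ((n : ℝ≥0)⁻¹ * ∑ i, ‖x i - y i‖₊ ^ p) ^ (1/p) with hE
  have hDcoe : ((n : ℝ≥0∞)⁻¹ * ∑ i, (‖x i - y i‖₊ : ℝ≥0∞) ^ p) ^ (1/p) = (E : ℝ≥0∞) := by
    rw [hE, ENNReal.coe_rpow_of_nonneg _ (by positivity), ENNReal.coe_mul,
      ENNReal.coe_finset_sum]
    congr 2
    · rw [ENNReal.coe_inv (by exact_mod_cast hn.ne'), ENNReal.coe_natCast]
    · exact Finset.sum_congr rfl fun i _ => (ENNReal.coe_rpow_of_nonneg _ hp0.le).symm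
  have h1 : A ≤ (E : ℝ≥0∞) + B := by
    rw [← hDcoe]
    exact wp_triangle n hn p hp γ x y
  have h2 : B ≤ (E : ℝ≥0∞) + A := by
    have := wp_triangle n hn p hp γ y x
    have hsym : ∀ i, (‖y i - x i‖₊ : ℝ≥0∞) = (‖x i - y i‖₊ : ℝ≥0∞) := by
      intro i; rw [← neg_sub (x i) (y i), nnnorm_neg]
    simp only [hsym] at this
    rw [← hDcoe]
    exact this
  have hAt : A ≠ ⊤ := wp_ne_top n hn p hp γ hmom x
  have hBt : B ≠ ⊤ := wp_ne_top n hn p hp γ hmom y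
  have hdist : dist A.toReal B.toReal ≤ (E : ℝ) := by
    rw [Real.dist_eq, abs_sub_le_iff]
    constructor
    · have := ENNReal.toReal_mono (by finiteness) h1
      rw [ENNReal.toReal_add ENNReal.coe_ne_top hBt, ENNReal.coe_toReal] at this
      linarith
    · have := ENNReal.toReal_mono (by finiteness) h2
      rw [ENNReal.toReal_add ENNReal.coe_ne_top hAt, ENNReal.coe_toReal] at this
      linarith
  refine hdist.trans ?_
  have hpm := pm_ineq n hn hp (fun i => ‖x i - y i‖₊)
  rw [← hE] at hpm
  have hcast : ((((n:ℝ≥0)) ^ (-(1 / max 2 p)) * (∑ i, ‖x i - y i‖₊ ^ (2:ℝ)) ^ (2⁻¹:ℝ) : ℝ≥0) : ℝ)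
      = ((n:ℝ≥0) ^ (-(1 / max 2 p)) : ℝ≥0) * dist x y := by
    rw [NNReal.coe_mul, NNReal.coe_rpow, NNReal.coe_rpow, NNReal.coe_sum]
    congr 1
    rw [EuclideanSpace.dist_eq, Real.sqrt_eq_rpow]
    congr 1
    · refine Finset.sum_congr rfl fun i _ => ?_
      rw [NNReal.coe_rpow, coe_nnnorm, dist_eq_norm, ← Real.rpow_natCast ‖x i - y i‖ 2]
      norm_num
    · norm_num
  calc (E:ℝ) ≤ _ := NNReal.coe_le_coe.mpr hpm
    _ = _ := hcast
end

section
/- Let μ, ν be probability measures on ℝ^d with finite p-th moments, p ≥ 1. Define w_p(θ) = W_p((p^θ)_♯ μ, (p^θ)_♯ ν) for θ in the unit sphere S^{d-1}, where p^θ(x) = θ^⊤x. Then w_p is Lipschitz on S^{d-1} with Lipschitz constant at most L = sup_{θ ∈ S^{d-1}} [ (∫|θ^⊤x|^p dμ)^{1/p} + (∫|θ^⊤x|^p dν)^{1/p} ]. -/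
open MeasureTheory ENNReal RealInnerProductSpace ProbabilityTheory

namespace WpAux

noncomputable def cost (p : ℝ) (π : Measure (ℝ × ℝ)) : ℝ≥0∞ :=
  ∫⁻ z, (‖z.1 - z.2‖₊ : ℝ≥0∞) ^ p ∂π

lemma measurable_costfn (p : ℝ) :
    Measurable fun z : ℝ × ℝ => (‖z.1 - z.2‖₊ : ℝ≥0∞) ^ p :=
  ((measurable_fst.sub measurable_snd).nnnorm.coe_nnreal_ennreal).pow measurable_const

lemma rpow_iInf {ι : Sort*} (f : ι → ℝ≥0∞) {y : ℝ} (hy : 0 < y) :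
    (⨅ i, f i) ^ y = ⨅ i, (f i) ^ y := by
  have h := (ENNReal.orderIsoRpow y hy).map_iInf f
  simp only [ENNReal.orderIsoRpow_apply] at h
  exact h

lemma wp_eq' {p : ℝ} (hp0 : 0 < p) (μ ν : Measure ℝ) :
    Wp p μ ν = ⨅ π ∈ {π : Measure (ℝ × ℝ) | π.map Prod.fst = μ ∧ π.map Prod.snd = ν},
      cost p π ^ (1 / p) := by
  rw [Wp]
  simp_rw [rpow_iInf _ (one_div_pos.mpr hp0)]
  rfl

lemma wp_le_coupling {p : ℝ} (hp : 0 ≤ 1 / p) {μ ν : Measure ℝ} {π : Measure (ℝ × ℝ)}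
    (h1 : π.map Prod.fst = μ) (h2 : π.map Prod.snd = ν) :
    Wp p μ ν ≤ (cost p π) ^ (1 / p) :=
  ENNReal.rpow_le_rpow (iInf₂_le π ⟨h1, h2⟩) hp

lemma prob_of_coupling {μ : Measure ℝ} [IsProbabilityMeasure μ] {π : Measure (ℝ × ℝ)}
    (h1 : π.map Prod.fst = μ) : IsProbabilityMeasure π := by
  constructor
  have h : π.map Prod.fst Set.univ = 1 := by rw [h1]; exact measure_univ
  rwa [Measure.map_apply measurable_fst MeasurableSet.univ, Set.preimage_univ] at h

lemma wp_symm {p : ℝ} (hp : 0 ≤ 1 / p) (μ ν : Measure ℝ) : Wp p μ ν = Wp p ν μ := by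
  have key : ∀ α β : Measure ℝ, Wp p α β ≤ Wp p β α := by
    intro α β
    rw [Wp, Wp]
    refine ENNReal.rpow_le_rpow ?_ hp
    refine le_iInf₂ fun π hπ => ?_
    have h1 : (π.map Prod.swap).map Prod.fst = α := by
      rw [Measure.map_map measurable_fst measurable_swap]; exact hπ.2
    have h2 : (π.map Prod.swap).map Prod.snd = β := by
      rw [Measure.map_map measurable_snd measurable_swap]; exact hπ.1
    refine le_trans (iInf₂_le (π.map Prod.swap) ⟨h1, h2⟩) ?_
    rw [lintegral_map (measurable_costfn p) measurable_swap]
    refine le_of_eq (lintegral_congr fun z => ?_)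
    show (‖(Prod.swap z).1 - (Prod.swap z).2‖₊ : ℝ≥0∞) ^ p = _
    rw [Prod.fst_swap, Prod.snd_swap, ← neg_sub, nnnorm_neg]
  exact le_antisymm (key μ ν) (key ν μ)

lemma wp_triangle {p : ℝ} (hp : 1 ≤ p) (μ1 μ2 μ3 : Measure ℝ)
    [IsProbabilityMeasure μ1] [IsProbabilityMeasure μ2] [IsProbabilityMeasure μ3] :
    Wp p μ1 μ3 ≤ Wp p μ1 μ2 + Wp p μ2 μ3 := by
  have hp0 : 0 < p := lt_of_lt_of_le one_pos hp
  have h1p : (0:ℝ) ≤ 1 / p := by positivity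
  rw [wp_eq' hp0 μ1 μ2, wp_eq' hp0 μ2 μ3]
  simp_rw [ENNReal.iInf_add, ENNReal.add_iInf]
  refine le_iInf₂ fun π12 h12 => le_iInf₂ fun π23 h23 => ?_
  obtain ⟨h121, h122⟩ := h12
  obtain ⟨h231, h232⟩ := h23
  haveI := prob_of_coupling (μ := μ1) h121
  haveI := prob_of_coupling (μ := μ2) h231
  set ρ : Measure (ℝ × ℝ) := π12.map Prod.swap with hρ
  haveI : IsProbabilityMeasure ρ := Measure.isProbabilityMeasure_map measurable_swap.aemeasurable
  have hρfst : ρ.fst = μ2 := by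
    show (π12.map Prod.swap).map Prod.fst = μ2
    rw [Measure.map_map measurable_fst measurable_swap]; exact h122
  have hρsnd : ρ.map Prod.snd = μ1 := by
    rw [hρ, Measure.map_map measurable_snd measurable_swap]; exact h121
  have hπ23fst : π23.fst = μ2 := h231
  set κ1 := ρ.condKernel with hκ1def
  set κ3 := π23.condKernel with hκ3def
  have hκ1 : μ2 ⊗ₘ κ1 = ρ := by rw [← hρfst]; exact ρ.disintegrate ρ.condKernel
  have hκ3 : μ2 ⊗ₘ κ3 = π23 := by rw [← hπ23fst]; exact π23.disintegrate π23.condKernel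
  set m : Measure (ℝ × ℝ × ℝ) := μ2 ⊗ₘ (κ1 ×ₖ κ3) with hm
  have hmeasg1 : Measurable fun z : ℝ × ℝ × ℝ => (z.1, z.2.1) :=
    measurable_fst.prodMk (measurable_fst.comp measurable_snd)
  have hmeasg2 : Measurable fun z : ℝ × ℝ × ℝ => (z.1, z.2.2) :=
    measurable_fst.prodMk (measurable_snd.comp measurable_snd)
  have hg1 : m.map (fun z => (z.1, z.2.1)) = ρ := by
    rw [← hκ1]
    ext s hs
    rw [Measure.map_apply hmeasg1 hs, hm,
      Measure.compProd_apply (hmeasg1 hs), Measure.compProd_apply hs]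
    refine lintegral_congr fun a => ?_
    have hset : (Prod.mk a ⁻¹' ((fun z : ℝ × ℝ × ℝ => (z.1, z.2.1)) ⁻¹' s))
        = (Prod.mk a ⁻¹' s) ×ˢ Set.univ := by
      ext b; simp [Set.mem_prod]
    rw [Kernel.prod_apply, hset, Measure.prod_prod, measure_univ, mul_one]
  have hg2 : m.map (fun z => (z.1, z.2.2)) = π23 := by
    rw [← hκ3]
    ext s hs
    rw [Measure.map_apply hmeasg2 hs, hm,
      Measure.compProd_apply (hmeasg2 hs), Measure.compProd_apply hs]
    refine lintegral_congr fun a => ?_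
    have hset : (Prod.mk a ⁻¹' ((fun z : ℝ × ℝ × ℝ => (z.1, z.2.2)) ⁻¹' s))
        = Set.univ ×ˢ (Prod.mk a ⁻¹' s) := by
      ext b; simp [Set.mem_prod]
    rw [Kernel.prod_apply, hset, Measure.prod_prod, measure_univ, one_mul]
  set π13 : Measure (ℝ × ℝ) := m.map (fun z => z.2) with hπ13
  have hmarg1 : π13.map Prod.fst = μ1 := by
    rw [hπ13, Measure.map_map measurable_fst measurable_snd]
    have h : (Prod.fst ∘ Prod.snd : ℝ × ℝ × ℝ → ℝ)
        = Prod.snd ∘ (fun z : ℝ × ℝ × ℝ => (z.1, z.2.1)) := rfl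
    rw [h, ← Measure.map_map measurable_snd hmeasg1, hg1, hρsnd]
  have hmarg2 : π13.map Prod.snd = μ3 := by
    rw [hπ13, Measure.map_map measurable_snd measurable_snd]
    have h : (Prod.snd ∘ Prod.snd : ℝ × ℝ × ℝ → ℝ)
        = Prod.snd ∘ (fun z : ℝ × ℝ × ℝ => (z.1, z.2.2)) := rfl
    rw [h, ← Measure.map_map measurable_snd hmeasg2, hg2]
    exact h232
  refine le_trans (wp_le_coupling h1p hmarg1 hmarg2) ?_
  have hstep1 : cost p π13
      ≤ ∫⁻ z, ((‖z.2.1 - z.1‖₊ : ℝ≥0∞) + (‖z.1 - z.2.2‖₊ : ℝ≥0∞)) ^ p ∂m := by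
    rw [cost, hπ13, lintegral_map (measurable_costfn p) measurable_snd]
    refine lintegral_mono fun z => ?_
    refine ENNReal.rpow_le_rpow ?_ (le_trans zero_le_one hp)
    have h : z.2.1 - z.2.2 = (z.2.1 - z.1) + (z.1 - z.2.2) := by ring
    rw [h]
    exact_mod_cast nnnorm_add_le _ _
  have hF : Measurable fun z : ℝ × ℝ × ℝ => (‖z.2.1 - z.1‖₊ : ℝ≥0∞) :=
    ((measurable_fst.comp measurable_snd).sub measurable_fst).nnnorm.coe_nnreal_ennreal
  have hG : Measurable fun z : ℝ × ℝ × ℝ => (‖z.1 - z.2.2‖₊ : ℝ≥0∞) :=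
    (measurable_fst.sub (measurable_snd.comp measurable_snd)).nnnorm.coe_nnreal_ennreal
  have hmink := ENNReal.lintegral_Lp_add_le (μ := m) hF.aemeasurable hG.aemeasurable hp
  have hFeq : ∫⁻ z, (‖z.2.1 - z.1‖₊ : ℝ≥0∞) ^ p ∂m = cost p π12 := by
    have h1 : ∫⁻ z, (‖z.2.1 - z.1‖₊ : ℝ≥0∞) ^ p ∂m
        = ∫⁻ w, (‖w.2 - w.1‖₊ : ℝ≥0∞) ^ p ∂(m.map (fun z => (z.1, z.2.1))) := by
      rw [lintegral_map (f := fun w : ℝ × ℝ => (‖w.2 - w.1‖₊ : ℝ≥0∞) ^ p) (((measurable_snd.sub measurable_fst).nnnorm.coe_nnreal_ennreal).pow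
        measurable_const) hmeasg1]
    rw [h1, hg1, hρ, lintegral_map (f := fun w : ℝ × ℝ => (‖w.2 - w.1‖₊ : ℝ≥0∞) ^ p) (((measurable_snd.sub
      measurable_fst).nnnorm.coe_nnreal_ennreal).pow measurable_const) measurable_swap]
    rfl
  have hGeq : ∫⁻ z, (‖z.1 - z.2.2‖₊ : ℝ≥0∞) ^ p ∂m = cost p π23 := by
    have h1 : ∫⁻ z, (‖z.1 - z.2.2‖₊ : ℝ≥0∞) ^ p ∂m
        = ∫⁻ w, (‖w.1 - w.2‖₊ : ℝ≥0∞) ^ p ∂(m.map (fun z => (z.1, z.2.2))) := by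
      rw [lintegral_map (measurable_costfn p) hmeasg2]
    rw [h1, hg2]
    rfl
  calc (cost p π13) ^ (1 / p)
      ≤ (∫⁻ z, ((‖z.2.1 - z.1‖₊ : ℝ≥0∞) + (‖z.1 - z.2.2‖₊ : ℝ≥0∞)) ^ p ∂m) ^ (1 / p) :=
        ENNReal.rpow_le_rpow hstep1 h1p
    _ ≤ (∫⁻ z, (‖z.2.1 - z.1‖₊ : ℝ≥0∞) ^ p ∂m) ^ (1 / p)
        + (∫⁻ z, (‖z.1 - z.2.2‖₊ : ℝ≥0∞) ^ p ∂m) ^ (1 / p) := hmink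
    _ = cost p π12 ^ (1 / p) + cost p π23 ^ (1 / p) := by rw [hFeq, hGeq]

lemma wp_le_dirac {p : ℝ} (hp : 0 ≤ 1 / p) (α : Measure ℝ) [IsProbabilityMeasure α] :
    Wp p α (Measure.dirac 0) ≤ (∫⁻ a, (‖a‖₊ : ℝ≥0∞) ^ p ∂α) ^ (1 / p) := by
  have h1 : (α.prod (Measure.dirac (0:ℝ))).map Prod.fst = α := by
    rw [Measure.map_fst_prod, measure_univ, one_smul]
  have h2 : (α.prod (Measure.dirac (0:ℝ))).map Prod.snd = Measure.dirac 0 := by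
    rw [Measure.map_snd_prod, measure_univ, one_smul]
  refine (wp_le_coupling hp h1 h2).trans (le_of_eq ?_)
  congr 1
  rw [cost, lintegral_prod _ (measurable_costfn p).aemeasurable]
  refine lintegral_congr fun a => ?_
  rw [show (fun y : ℝ => ((‖(a, y).1 - (a, y).2‖₊ : ℝ≥0∞)) ^ p)
      = fun y : ℝ => (‖a - y‖₊ : ℝ≥0∞) ^ p from rfl,
    lintegral_dirac (0:ℝ) (fun y : ℝ => (‖a - y‖₊ : ℝ≥0∞) ^ p)]
  simp

lemma wp_le_moments {p : ℝ} (hp : 1 ≤ p) (α β : Measure ℝ)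
    [IsProbabilityMeasure α] [IsProbabilityMeasure β] :
    Wp p α β ≤ (∫⁻ a, (‖a‖₊ : ℝ≥0∞) ^ p ∂α) ^ (1 / p)
      + (∫⁻ a, (‖a‖₊ : ℝ≥0∞) ^ p ∂β) ^ (1 / p) := by
  have hp0 : 0 < p := lt_of_lt_of_le one_pos hp
  have h1p : (0:ℝ) ≤ 1 / p := by positivity
  refine (wp_triangle hp α (Measure.dirac 0) β).trans (add_le_add (wp_le_dirac h1p α) ?_)
  rw [wp_symm h1p]
  exact wp_le_dirac h1p β

section Euclidean

variable {d : ℕ} {p : ℝ}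

lemma measurable_proj (θ : EuclideanSpace ℝ (Fin d)) :
    Measurable fun x : EuclideanSpace ℝ (Fin d) => ⟪θ, x⟫ :=
  (continuous_const.inner continuous_id).measurable

lemma wp_proj_le (hp : 0 ≤ 1 / p) (θ1 θ2 : EuclideanSpace ℝ (Fin d))
    (μ : Measure (EuclideanSpace ℝ (Fin d))) :
    Wp p (μ.map fun x => ⟪θ1, x⟫) (μ.map fun x => ⟪θ2, x⟫)
      ≤ (∫⁻ x, (‖⟪θ1 - θ2, x⟫‖₊ : ℝ≥0∞) ^ p ∂μ) ^ (1 / p) := by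
  set T : EuclideanSpace ℝ (Fin d) → ℝ × ℝ := fun x => (⟪θ1, x⟫, ⟪θ2, x⟫) with hT
  have hTm : Measurable T := (measurable_proj θ1).prodMk (measurable_proj θ2)
  have h1 : (μ.map T).map Prod.fst = μ.map fun x => ⟪θ1, x⟫ := by
    rw [Measure.map_map measurable_fst hTm]; rfl
  have h2 : (μ.map T).map Prod.snd = μ.map fun x => ⟪θ2, x⟫ := by
    rw [Measure.map_map measurable_snd hTm]; rfl
  refine (wp_le_coupling hp h1 h2).trans (le_of_eq ?_)
  congr 1
  rw [cost, lintegral_map (measurable_costfn p) hTm]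
  refine lintegral_congr fun x => ?_
  show (‖⟪θ1, x⟫ - ⟪θ2, x⟫‖₊ : ℝ≥0∞) ^ p = _
  rw [← inner_sub_left]

lemma int_inner {θ : EuclideanSpace ℝ (Fin d)} (hθ : ‖θ‖ ≤ 1) (hp0 : 0 ≤ p)
    {μ : Measure (EuclideanSpace ℝ (Fin d))}
    (hμ : Integrable (fun x => ‖x‖ ^ p) μ) :
    Integrable (fun x => |⟪θ, x⟫| ^ p) μ := by
  refine hμ.mono ?_ (Filter.Eventually.of_forall fun x => ?_)
  · exact (((continuous_const.inner continuous_id).abs.rpow_const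
      (fun x => Or.inr hp0))).aestronglyMeasurable
  · have h1 : |⟪θ, x⟫| ≤ ‖x‖ := by
      refine (abs_real_inner_le_norm θ x).trans ?_
      exact mul_le_of_le_one_left (norm_nonneg x) hθ
    rw [Real.norm_eq_abs, Real.norm_eq_abs, abs_of_nonneg (Real.rpow_nonneg (abs_nonneg _) p),
      abs_of_nonneg (Real.rpow_nonneg (norm_nonneg _) p)]
    exact Real.rpow_le_rpow (abs_nonneg _) h1 hp0

lemma lint_eq {θ : EuclideanSpace ℝ (Fin d)} (hp0 : 0 ≤ p)
    {μ : Measure (EuclideanSpace ℝ (Fin d))}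
    (hint : Integrable (fun x => |⟪θ, x⟫| ^ p) μ) :
    ∫⁻ x, (‖⟪θ, x⟫‖₊ : ℝ≥0∞) ^ p ∂μ = ENNReal.ofReal (∫ x, |⟪θ, x⟫| ^ p ∂μ) := by
  rw [MeasureTheory.ofReal_integral_eq_lintegral_ofReal hint
    (Filter.Eventually.of_forall fun x => Real.rpow_nonneg (abs_nonneg _) p)]
  refine lintegral_congr fun x => ?_
  rw [← enorm_eq_nnnorm, Real.enorm_eq_ofReal_abs, ← ENNReal.ofReal_rpow_of_nonneg (abs_nonneg _) hp0]

lemma lint_map (θ : EuclideanSpace ℝ (Fin d)) (μ : Measure (EuclideanSpace ℝ (Fin d))) :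
    ∫⁻ a, (‖a‖₊ : ℝ≥0∞) ^ p ∂(μ.map fun x => ⟪θ, x⟫)
      = ∫⁻ x, (‖⟪θ, x⟫‖₊ : ℝ≥0∞) ^ p ∂μ :=
  lintegral_map ((measurable_nnnorm.coe_nnreal_ennreal).pow measurable_const)
    (measurable_proj θ)

lemma wp_map_ne_top (hp : 1 ≤ p) {θ : EuclideanSpace ℝ (Fin d)} (hθ : ‖θ‖ ≤ 1)
    (μ ν : Measure (EuclideanSpace ℝ (Fin d)))
    [IsProbabilityMeasure μ] [IsProbabilityMeasure ν]
    (hμ : Integrable (fun x => ‖x‖ ^ p) μ) (hν : Integrable (fun x => ‖x‖ ^ p) ν) :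
    Wp p (μ.map fun x => ⟪θ, x⟫) (ν.map fun x => ⟪θ, x⟫) ≠ ⊤ := by
  have hp0 : (0:ℝ) ≤ p := le_trans zero_le_one hp
  haveI : IsProbabilityMeasure (μ.map fun x => ⟪θ, x⟫) :=
    Measure.isProbabilityMeasure_map (measurable_proj θ).aemeasurable
  haveI : IsProbabilityMeasure (ν.map fun x => ⟪θ, x⟫) :=
    Measure.isProbabilityMeasure_map (measurable_proj θ).aemeasurable
  refine ne_top_of_le_ne_top ?_ (wp_le_moments hp _ _)
  rw [lint_map, lint_map, lint_eq hp0 (int_inner hθ hp0 hμ), lint_eq hp0 (int_inner hθ hp0 hν)]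
  exact ENNReal.add_ne_top.mpr
    ⟨ENNReal.rpow_ne_top_of_nonneg (by positivity) ENNReal.ofReal_ne_top,
     ENNReal.rpow_ne_top_of_nonneg (by positivity) ENNReal.ofReal_ne_top⟩

end Euclidean

end WpAux

open WpAux in
/-- The map `θ ↦ W_p((p^θ)_♯μ, (p^θ)_♯ν)` is Lipschitz on the unit sphere with constant
at most `L = sup_{θ ∈ S^{d-1}} [(∫|θ^⊤x|^p dμ)^{1/p} + (∫|θ^⊤x|^p dν)^{1/p}]`. -/
theorem stmt6 {d : ℕ} (p : ℝ) (hp : 1 ≤ p)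
    (μ ν : Measure (EuclideanSpace ℝ (Fin d)))
    [IsProbabilityMeasure μ] [IsProbabilityMeasure ν]
    (hμ : Integrable (fun x => ‖x‖ ^ p) μ) (hν : Integrable (fun x => ‖x‖ ^ p) ν)
    (L : ℝ)
    (hL : L = ⨆ θ : Metric.sphere (0 : EuclideanSpace ℝ (Fin d)) 1,
      ((∫ x, |⟪(θ : EuclideanSpace ℝ (Fin d)), x⟫| ^ p ∂μ) ^ (1 / p) +
       (∫ x, |⟪(θ : EuclideanSpace ℝ (Fin d)), x⟫| ^ p ∂ν) ^ (1 / p))) :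
    LipschitzOnWith L.toNNReal
      (fun θ : EuclideanSpace ℝ (Fin d) =>
        (Wp p (μ.map fun x => ⟪θ, x⟫) (ν.map fun x => ⟪θ, x⟫)).toReal)
      (Metric.sphere 0 1) := by
  have hp0 : 0 < p := lt_of_lt_of_le one_pos hp
  have hp0' : (0:ℝ) ≤ p := hp0.le
  have h1p : (0:ℝ) ≤ 1 / p := by positivity
  set A : EuclideanSpace ℝ (Fin d) → ℝ := fun θ =>
    (∫ x, |⟪θ, x⟫| ^ p ∂μ) ^ (1 / p) + (∫ x, |⟪θ, x⟫| ^ p ∂ν) ^ (1 / p) with hA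
  have hA0 : ∀ θ, 0 ≤ A θ := by
    intro θ
    have h1 : 0 ≤ ∫ x, |⟪θ, x⟫| ^ p ∂μ :=
      integral_nonneg fun x => Real.rpow_nonneg (abs_nonneg _) _
    have h2 : 0 ≤ ∫ x, |⟪θ, x⟫| ^ p ∂ν :=
      integral_nonneg fun x => Real.rpow_nonneg (abs_nonneg _) _
    positivity
  have hBdd : BddAbove (Set.range fun θ : Metric.sphere (0 : EuclideanSpace ℝ (Fin d)) 1 =>
      A (θ : EuclideanSpace ℝ (Fin d))) := by
    refine ⟨(∫ x, ‖x‖ ^ p ∂μ) ^ (1 / p) + (∫ x, ‖x‖ ^ p ∂ν) ^ (1 / p), ?_⟩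
    rintro r ⟨θ, rfl⟩
    have hθ : ‖(θ : EuclideanSpace ℝ (Fin d))‖ = 1 := by
      simpa using mem_sphere_zero_iff_norm.mp θ.2
    have hbound : ∀ (m : Measure (EuclideanSpace ℝ (Fin d))),
        Integrable (fun x => ‖x‖ ^ p) m →
        (∫ x, |⟪(θ : EuclideanSpace ℝ (Fin d)), x⟫| ^ p ∂m) ^ (1 / p)
          ≤ (∫ x, ‖x‖ ^ p ∂m) ^ (1 / p) := by
      intro m hm
      refine Real.rpow_le_rpow (integral_nonneg fun x => Real.rpow_nonneg (abs_nonneg _) _)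
        (integral_mono (int_inner hθ.le hp0' hm) hm fun x => ?_) h1p
      have h1 : |⟪(θ : EuclideanSpace ℝ (Fin d)), x⟫| ≤ ‖x‖ := by
        refine (abs_real_inner_le_norm _ x).trans ?_
        exact mul_le_of_le_one_left (norm_nonneg x) hθ.le
      exact Real.rpow_le_rpow (abs_nonneg _) h1 hp0'
    exact add_le_add (hbound μ hμ) (hbound ν hν)
  have hsub : ∀ θ ∈ Metric.sphere (0 : EuclideanSpace ℝ (Fin d)) 1, A θ ≤ L := by
    intro θ hθ
    rw [hL]
    exact le_ciSup hBdd (⟨θ, hθ⟩ : Metric.sphere (0 : EuclideanSpace ℝ (Fin d)) 1)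
  rw [lipschitzOnWith_iff_dist_le_mul]
  intro θ1 h1 θ2 h2
  have hL0 : 0 ≤ L := le_trans (hA0 θ1) (hsub θ1 h1)
  by_cases heq : θ1 = θ2
  · simp [heq, mul_nonneg (NNReal.coe_nonneg _) dist_nonneg]
  have key : ∀ θa, θa ∈ Metric.sphere (0 : EuclideanSpace ℝ (Fin d)) 1 →
      ∀ θb, θb ∈ Metric.sphere (0 : EuclideanSpace ℝ (Fin d)) 1 → θa ≠ θb →
      (Wp p (μ.map fun x => ⟪θa, x⟫) (ν.map fun x => ⟪θa, x⟫)).toReal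
        ≤ (Wp p (μ.map fun x => ⟪θb, x⟫) (ν.map fun x => ⟪θb, x⟫)).toReal
          + L * ‖θa - θb‖ := by
    intro θa ha θb hb hab
    have hna : ‖θa‖ = 1 := mem_sphere_zero_iff_norm.mp ha
    have hnb : ‖θb‖ = 1 := mem_sphere_zero_iff_norm.mp hb
    set c : ℝ := ‖θa - θb‖ with hc
    have hc0 : 0 < c := norm_pos_iff.mpr (sub_ne_zero.mpr hab)
    set u : EuclideanSpace ℝ (Fin d) := ‖θa - θb‖⁻¹ • (θa - θb) with hu
    have hun : ‖u‖ = 1 := norm_smul_inv_norm (sub_ne_zero.mpr hab)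
    have humem : u ∈ Metric.sphere (0 : EuclideanSpace ℝ (Fin d)) 1 :=
      mem_sphere_zero_iff_norm.mpr hun
    have hcu : c • u = θa - θb := by
      rw [hu, hc, smul_smul, mul_inv_cancel₀ (ne_of_gt hc0), one_smul]
    have hinner : ∀ x : EuclideanSpace ℝ (Fin d),
        |⟪θa - θb, x⟫| ^ p = c ^ p * |⟪u, x⟫| ^ p := by
      intro x
      rw [← hcu, real_inner_smul_left, abs_mul, abs_of_nonneg hc0.le,
        Real.mul_rpow hc0.le (abs_nonneg _)]
    have hintuμ := int_inner hun.le hp0' hμ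
    have hintuν := int_inner hun.le hp0' hν
    -- the two transport bounds
    have hWbound : ∀ (m : Measure (EuclideanSpace ℝ (Fin d))), IsProbabilityMeasure m →
        Integrable (fun x => ‖x‖ ^ p) m →
        Wp p (m.map fun x => ⟪θa, x⟫) (m.map fun x => ⟪θb, x⟫)
          ≤ ENNReal.ofReal (c * (∫ x, |⟪u, x⟫| ^ p ∂m) ^ (1 / p)) := by
      intro m hm hmint
      have hintu := int_inner hun.le hp0' hmint
      have hintab : Integrable (fun x => |⟪θa - θb, x⟫| ^ p) m := by
        refine (hintu.const_mul (c ^ p)).congr ?_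
        exact Filter.Eventually.of_forall fun x => (hinner x).symm
      have hI0 : 0 ≤ ∫ x, |⟪u, x⟫| ^ p ∂m :=
        integral_nonneg fun x => Real.rpow_nonneg (abs_nonneg _) _
      refine (wp_proj_le h1p θa θb m).trans (le_of_eq ?_)
      rw [lint_eq hp0' hintab]
      have hIeq : ∫ x, |⟪θa - θb, x⟫| ^ p ∂m = c ^ p * ∫ x, |⟪u, x⟫| ^ p ∂m := by
        simp_rw [hinner]
        exact integral_const_mul _ _
      rw [hIeq, ENNReal.ofReal_rpow_of_nonneg (by positivity) h1p]
      congr 1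
      rw [Real.mul_rpow (by positivity) hI0, ← Real.rpow_mul hc0.le,
        mul_one_div_cancel (ne_of_gt hp0), Real.rpow_one]
    -- probability instances
    haveI : IsProbabilityMeasure (μ.map fun x => ⟪θa, x⟫) :=
      Measure.isProbabilityMeasure_map (measurable_proj θa).aemeasurable
    haveI : IsProbabilityMeasure (μ.map fun x => ⟪θb, x⟫) :=
      Measure.isProbabilityMeasure_map (measurable_proj θb).aemeasurable
    haveI : IsProbabilityMeasure (ν.map fun x => ⟪θa, x⟫) :=
      Measure.isProbabilityMeasure_map (measurable_proj θa).aemeasurable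
    haveI : IsProbabilityMeasure (ν.map fun x => ⟪θb, x⟫) :=
      Measure.isProbabilityMeasure_map (measurable_proj θb).aemeasurable
    have htri : Wp p (μ.map fun x => ⟪θa, x⟫) (ν.map fun x => ⟪θa, x⟫)
        ≤ ENNReal.ofReal (c * (∫ x, |⟪u, x⟫| ^ p ∂μ) ^ (1 / p))
          + (Wp p (μ.map fun x => ⟪θb, x⟫) (ν.map fun x => ⟪θb, x⟫)
            + ENNReal.ofReal (c * (∫ x, |⟪u, x⟫| ^ p ∂ν) ^ (1 / p))) := by
      refine (wp_triangle hp _ (μ.map fun x => ⟪θb, x⟫) _).trans ?_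
      refine add_le_add (hWbound μ inferInstance hμ) ?_
      refine (wp_triangle hp _ (ν.map fun x => ⟪θb, x⟫) _).trans ?_
      refine add_le_add le_rfl ?_
      rw [wp_symm h1p]
      exact hWbound ν inferInstance hν
    have hWb_ne := wp_map_ne_top hp hnb.le μ ν hμ hν
    have hRHS_ne : ENNReal.ofReal (c * (∫ x, |⟪u, x⟫| ^ p ∂μ) ^ (1 / p))
        + (Wp p (μ.map fun x => ⟪θb, x⟫) (ν.map fun x => ⟪θb, x⟫)
          + ENNReal.ofReal (c * (∫ x, |⟪u, x⟫| ^ p ∂ν) ^ (1 / p))) ≠ ⊤ :=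
      ENNReal.add_ne_top.mpr ⟨ENNReal.ofReal_ne_top,
        ENNReal.add_ne_top.mpr ⟨hWb_ne, ENNReal.ofReal_ne_top⟩⟩
    have hmono := ENNReal.toReal_mono hRHS_ne htri
    rw [ENNReal.toReal_add ENNReal.ofReal_ne_top
        (ENNReal.add_ne_top.mpr ⟨hWb_ne, ENNReal.ofReal_ne_top⟩),
      ENNReal.toReal_add hWb_ne ENNReal.ofReal_ne_top,
      ENNReal.toReal_ofReal, ENNReal.toReal_ofReal] at hmono
    · have hAu : A u ≤ L := hsub u humem
      have hIμ0 : 0 ≤ (∫ x, |⟪u, x⟫| ^ p ∂μ) ^ (1 / p) := by positivity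
      have hIν0 : 0 ≤ (∫ x, |⟪u, x⟫| ^ p ∂ν) ^ (1 / p) := by positivity
      have hfin : c * (∫ x, |⟪u, x⟫| ^ p ∂μ) ^ (1 / p)
          + c * (∫ x, |⟪u, x⟫| ^ p ∂ν) ^ (1 / p) = c * A u := by
        rw [hA]; ring
      have hcL : c * A u ≤ c * L := mul_le_mul_of_nonneg_left hAu hc0.le
      calc (Wp p (μ.map fun x => ⟪θa, x⟫) (ν.map fun x => ⟪θa, x⟫)).toReal
          ≤ c * (∫ x, |⟪u, x⟫| ^ p ∂μ) ^ (1 / p)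
            + ((Wp p (μ.map fun x => ⟪θb, x⟫) (ν.map fun x => ⟪θb, x⟫)).toReal
              + c * (∫ x, |⟪u, x⟫| ^ p ∂ν) ^ (1 / p)) := hmono
        _ = (Wp p (μ.map fun x => ⟪θb, x⟫) (ν.map fun x => ⟪θb, x⟫)).toReal + c * A u := by
            rw [← hfin]; ring
        _ ≤ _ := by
            refine add_le_add le_rfl ?_
            calc c * A u ≤ c * L := hcL
              _ = L * ‖θa - θb‖ := by rw [hc]; ring
    · positivity
    · positivity
  have hd1 : dist ((fun θ : EuclideanSpace ℝ (Fin d) =>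
      (Wp p (μ.map fun x => ⟪θ, x⟫) (ν.map fun x => ⟪θ, x⟫)).toReal) θ1)
      ((fun θ : EuclideanSpace ℝ (Fin d) =>
      (Wp p (μ.map fun x => ⟪θ, x⟫) (ν.map fun x => ⟪θ, x⟫)).toReal) θ2) ≤ L * ‖θ1 - θ2‖ := by
    rw [Real.dist_eq, abs_sub_le_iff]
    constructor
    · have h := key θ1 h1 θ2 h2 heq
      linarith
    · have h := key θ2 h2 θ1 h1 (Ne.symm heq)
      rw [norm_sub_rev] at h
      linarith
  calc dist _ _ ≤ L * ‖θ1 - θ2‖ := hd1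
    _ = (L.toNNReal : ℝ) * dist θ1 θ2 := by
        rw [Real.coe_toNNReal L hL0, dist_eq_norm]
end

section
/- Let 1 ≤ p ≤ q, σ ≥ 0, and 0 ≤ ε ≤ 1/2. Let μ be a probability measure on ℝ with ∫ |x - x₀|^q dμ ≤ σ^q for some x₀ ∈ ℝ. Then for every probability measure ν with ν ≤ (1-ε)^{-1} μ (setwise), the means satisfy |∫ x dμ - ∫ x dν| ≤ C σ ε^{1 - 1/q} for a universal constant C. -/
open MeasureTheory ENNReal

set_option maxHeartbeats 2000000 in
/-- Resilience of distributions on `ℝ` with bounded `q`-th central moments: there is a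
universal constant `C` such that if `1 ≤ p ≤ q`, `0 ≤ ε ≤ 1/2`, `μ` is a probability
measure on `ℝ` with `∫|x-x₀|^q dμ ≤ σ^q`, and `ν ≤ (1-ε)⁻¹ μ` setwise, then
`|∫x dμ - ∫x dν| ≤ C σ ε^{1-1/q}`. -/
theorem stmt8 :
    ∃ C : ℝ, 0 < C ∧
      ∀ (p q σ ε : ℝ), 1 ≤ p → p ≤ q → 0 ≤ σ → 0 ≤ ε → ε ≤ 1 / 2 →
        ∀ (μ ν : Measure ℝ) (x₀ : ℝ), IsProbabilityMeasure μ → IsProbabilityMeasure ν →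
          Integrable (fun x => |x - x₀| ^ q) μ →
          (∫ x, |x - x₀| ^ q ∂μ) ≤ σ ^ q →
          ν ≤ (ENNReal.ofReal (1 - ε))⁻¹ • μ →
          |(∫ x, x ∂μ) - ∫ x, x ∂ν| ≤ C * σ * ε ^ (1 - 1 / q) := by
  refine ⟨5, by norm_num, ?_⟩
  intro p q σ ε hp hpq hσ hε hε2 μ ν x₀ hμ hν hint hmom hle
  have hq1 : 1 ≤ q := hp.trans hpq
  have hq0 : 0 < q := lt_of_lt_of_le one_pos hq1
  have h1ε : (0:ℝ) < 1 - ε := by linarith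
  set c : ℝ≥0∞ := (ENNReal.ofReal (1 - ε))⁻¹ with hc_def
  have hc0 : c ≠ 0 := by
    simp [hc_def, ENNReal.inv_ne_zero, ENNReal.ofReal_ne_top]
  have hc_top : c ≠ ∞ := by
    simp only [hc_def, ne_eq, ENNReal.inv_eq_top]
    exact (ENNReal.ofReal_pos.mpr h1ε).ne'
  have hcR : c.toReal = (1 - ε)⁻¹ := by
    rw [hc_def, ENNReal.toReal_inv, ENNReal.toReal_ofReal h1ε.le]
  -- ν ≪ μ
  have hac : ν ≪ μ :=
    (Measure.absolutelyContinuous_of_le hle).trans Measure.smul_absolutelyContinuous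
  -- c ≤ 2 and ν ≤ 2 • μ
  have hc2 : c ≤ 2 := by
    rw [hc_def, ENNReal.inv_le_iff_inv_le]
    calc (2:ℝ≥0∞)⁻¹ = ENNReal.ofReal (2:ℝ)⁻¹ := by
          rw [ENNReal.ofReal_inv_of_pos (by norm_num)]; norm_num
      _ ≤ ENNReal.ofReal (1 - ε) := ENNReal.ofReal_le_ofReal (by norm_num; linarith)
  have hsm : c • μ ≤ (2:ℝ≥0∞) • μ := by
    rw [Measure.le_iff']
    intro s
    simp only [Measure.smul_apply, smul_eq_mul]
    exact mul_le_mul_left hc2 _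
  have hν2 : ν ≤ (2:ℝ≥0∞) • μ := hle.trans hsm
  -- density
  set G : ℝ → ℝ := fun x => (ν.rnDeriv μ x).toReal with hG_def
  have hGmeas : Measurable G := (Measure.measurable_rnDeriv ν μ).ennreal_toReal
  have hGnn : ∀ x, 0 ≤ G x := fun x => ENNReal.toReal_nonneg
  have hGint : Integrable G μ := Measure.integrable_toReal_rnDeriv
  have hGone : (∫ x, G x ∂μ) = 1 := by
    rw [hG_def, Measure.integral_toReal_rnDeriv hac]
    simp
  -- a.e. bound on the density
  have hSF : SigmaFinite (c • μ) := by
    have := μ.smul_finite hc_top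
    infer_instance
  have h_rn_le : ∀ᵐ x ∂μ, ν.rnDeriv μ x ≤ c := by
    have h1 : ν.rnDeriv (c • μ) ≤ᵐ[c • μ] 1 := Measure.rnDeriv_le_one_of_le hle
    have h1' : ν.rnDeriv (c • μ) ≤ᵐ[μ] 1 :=
      (Measure.absolutelyContinuous_smul hc0).ae_le h1
    have h2 := Measure.rnDeriv_smul_right_of_ne_top ν μ hc0 hc_top
    filter_upwards [h1', h2] with x hx1 hx2
    rw [hx2] at hx1
    simp only [Pi.smul_apply, smul_eq_mul, Pi.one_apply] at hx1
    have h3 := mul_le_mul_right hx1 c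
    rwa [← mul_assoc, ENNReal.mul_inv_cancel hc0 hc_top, one_mul, mul_one] at h3
  have hG_le : ∀ᵐ x ∂μ, G x ≤ 1 + 2 * ε := by
    filter_upwards [h_rn_le] with x hx
    have h1 : G x ≤ c.toReal := ENNReal.toReal_mono hc_top hx
    rw [hcR] at h1
    have h2 : (1 - ε)⁻¹ ≤ 1 + 2 * ε := by
      rw [inv_eq_one_div, div_le_iff₀ h1ε]; nlinarith
    linarith
  -- integrability of the identity
  have hxμ_int : Integrable (fun x : ℝ => x) μ := by
    have hbd : Integrable (fun x => (|x₀| + 1) + |x - x₀| ^ q) μ := (integrable_const _).add hint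
    refine Integrable.mono' hbd
      measurable_id.aestronglyMeasurable (Filter.Eventually.of_forall fun x => ?_)
    have h1 : |x| - |x₀| ≤ |x - x₀| := abs_sub_abs_le_abs_sub x x₀
    have h2 : |x - x₀| ≤ 1 + |x - x₀| ^ q := by
      rcases le_total (|x - x₀|) 1 with h | h
      · have := Real.rpow_nonneg (abs_nonneg (x - x₀)) q
        linarith
      · have h3 : |x - x₀| ^ (1:ℝ) ≤ |x - x₀| ^ q :=
          Real.rpow_le_rpow_of_exponent_le h hq1
        rw [Real.rpow_one] at h3
        linarith
    rw [Real.norm_eq_abs]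
    linarith
  have hxν_int : Integrable (fun x : ℝ => x) ν :=
    (hxμ_int.smul_measure (by norm_num : (2:ℝ≥0∞) ≠ ∞)).mono_measure hν2
  have hxmul : (∫ x, G x * x ∂μ) = ∫ x, x ∂ν := by
    have h := integral_rnDeriv_smul hac (f := fun x : ℝ => x)
    simpa [smul_eq_mul] using h
  have hxGint : Integrable (fun x => G x * x) μ := by
    have h := (integrable_rnDeriv_smul_iff hac (f := fun x : ℝ => x)).mpr hxν_int
    simpa [smul_eq_mul] using h
  -- key identity
  have hG1int : Integrable (fun x => G x - 1) μ := hGint.sub (integrable_const 1)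
  have hsubGx : Integrable (fun x => G x * x - x) μ := hxGint.sub hxμ_int
  have h1G : Integrable (fun x => 1 - G x) μ := (integrable_const 1).sub hGint
  have hprod_int : Integrable (fun x => (x - x₀) * (G x - 1)) μ := by
    have he : (fun x => (x - x₀) * (G x - 1))
        = fun x => (G x * x - x) - x₀ * (G x - 1) := funext fun x => by ring
    rw [he]
    exact hsubGx.sub (hG1int.const_mul x₀)
  have hG1zero : (∫ x, (G x - 1) ∂μ) = 0 := by
    rw [integral_sub hGint (integrable_const 1), hGone]
    simp
  have hK : (∫ x, (x - x₀) * (G x - 1) ∂μ) = (∫ x, x ∂ν) - ∫ x, x ∂μ := by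
    have he : (fun x => (x - x₀) * (G x - 1))
        = fun x => (G x * x - x) - x₀ * (G x - 1) := funext fun x => by ring
    rw [he, integral_sub hsubGx (hG1int.const_mul x₀),
      integral_sub hxGint hxμ_int, integral_const_mul, hG1zero, hxmul]
    ring
  -- trivial cases
  rcases eq_or_lt_of_le hε with hε0 | hεpos
  · -- ε = 0 : then ν = μ in effect
    have hG_le1 : ∀ᵐ x ∂μ, G x ≤ 1 := by
      filter_upwards [hG_le] with x hx; rw [← hε0] at hx; linarith
    have hz : (∫ x, (1 - G x) ∂μ) = 0 := by
      rw [integral_sub (integrable_const 1) hGint, hGone]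
      simp
    have h0 : (fun x => 1 - G x) =ᵐ[μ] 0 := by
      refine (integral_eq_zero_iff_of_nonneg_ae ?_ h1G).mp hz
      filter_upwards [hG_le1] with x hx
      simp only [Pi.zero_apply]
      linarith
    have hident : (fun x => G x * x) =ᵐ[μ] fun x => x := by
      filter_upwards [h0] with x hx
      simp only [Pi.zero_apply] at hx
      have : G x = 1 := by linarith
      rw [this, one_mul]
    have : (∫ x, x ∂ν) = ∫ x, x ∂μ := by
      rw [← hxmul, integral_congr_ae hident]
    rw [this, sub_self, abs_zero]
    positivity
  rcases eq_or_lt_of_le hσ with hσ0 | hσpos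
  · -- σ = 0 : μ and ν are concentrated at x₀
    have hσq : σ ^ q = 0 := by rw [← hσ0, Real.zero_rpow hq0.ne']
    have hnn : 0 ≤ᵐ[μ] fun x => |x - x₀| ^ q :=
      Filter.Eventually.of_forall fun x => Real.rpow_nonneg (abs_nonneg _) _
    have hzero : (∫ x, |x - x₀| ^ q ∂μ) = 0 :=
      le_antisymm (hσq ▸ hmom) (integral_nonneg fun x => Real.rpow_nonneg (abs_nonneg _) _)
    have haeq : (fun x => |x - x₀| ^ q) =ᵐ[μ] 0 :=
      (integral_eq_zero_iff_of_nonneg_ae hnn hint).mp hzero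
    have haeμ : ∀ᵐ x ∂μ, x = x₀ := by
      filter_upwards [haeq] with x hx
      simp only [Pi.zero_apply] at hx
      have := (Real.rpow_eq_zero (abs_nonneg _) hq0.ne').mp hx
      have := abs_eq_zero.mp this
      linarith
    have hμ0 : μ {x : ℝ | ¬ x = x₀} = 0 := ae_iff.mp haeμ
    have hν0 : ν {x : ℝ | ¬ x = x₀} = 0 := by
      have h1 := Measure.le_iff'.mp hν2 {x : ℝ | ¬ x = x₀}
      simp only [Measure.smul_apply, smul_eq_mul, hμ0, mul_zero] at h1
      exact le_antisymm h1 zero_le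
    have haeν : ∀ᵐ x ∂ν, x = x₀ := ae_iff.mpr hν0
    have h1 : (∫ x, x ∂μ) = x₀ := by
      rw [integral_congr_ae (g := fun _ => x₀) (by filter_upwards [haeμ] with x hx; exact hx)]
      simp
    have h2 : (∫ x, x ∂ν) = x₀ := by
      rw [integral_congr_ae (g := fun _ => x₀) (by filter_upwards [haeν] with x hx; exact hx)]
      simp
    rw [h1, h2, sub_self, abs_zero]
    positivity
  -- main case : σ > 0, ε > 0
  have habs1 : ∀ᵐ x ∂μ, |G x - 1| ≤ 1 := by
    filter_upwards [hG_le] with x hx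
    rw [abs_le]
    constructor
    · have := hGnn x; linarith
    · linarith
  -- ∫ |G - 1| ≤ 4 ε
  have hG1abs_int : Integrable (fun x => |G x - 1|) μ := hG1int.abs
  have hmaxint : Integrable (fun x => max (G x - 1) 0) μ := hG1int.pos_part
  have hmax_le : (∫ x, max (G x - 1) 0 ∂μ) ≤ 2 * ε := by
    calc (∫ x, max (G x - 1) 0 ∂μ) ≤ ∫ _, 2 * ε ∂μ := by
          refine integral_mono_ae hmaxint (integrable_const _) ?_
          filter_upwards [hG_le] with x hx
          exact max_le (by linarith) (by linarith)
      _ = 2 * ε := by simp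
  have h41 : (∫ x, |G x - 1| ∂μ) ≤ 4 * ε := by
    have he : (fun x => |G x - 1|) = fun x => (1 - G x) + 2 * max (G x - 1) 0 := by
      funext x
      rcases le_total (G x) 1 with h | h
      · rw [abs_of_nonpos (by linarith), max_eq_right (by linarith)]; ring
      · rw [abs_of_nonneg (by linarith), max_eq_left (by linarith)]; ring
    rw [he, integral_add h1G (hmaxint.const_mul 2),
      integral_sub (integrable_const 1) hGint, hGone, integral_const_mul]
    simp only [integral_const, measure_univ, ENNReal.toReal_one, smul_eq_mul, one_mul, probReal_univ]
    linarith
  -- truncation level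
  set M : ℝ := σ * ε ^ (-(1/q)) with hM_def
  have hM0 : 0 < M := mul_pos hσpos (Real.rpow_pos_of_pos hεpos _)
  have hMq : (0:ℝ) ≤ M ^ (1 - q) := Real.rpow_nonneg hM0.le _
  have hptw : ∀ᵐ x ∂μ, |(x - x₀) * (G x - 1)|
      ≤ M * |G x - 1| + M ^ (1 - q) * |x - x₀| ^ q := by
    filter_upwards [habs1] with x h1
    rw [abs_mul]
    have hqnn : (0:ℝ) ≤ |x - x₀| ^ q := Real.rpow_nonneg (abs_nonneg _) _
    rcases le_total (|x - x₀|) M with hle' | hle'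
    · have h2 : |x - x₀| * |G x - 1| ≤ M * |G x - 1| :=
        mul_le_mul_of_nonneg_right hle' (abs_nonneg _)
      nlinarith
    · have h3 : |x - x₀| * |G x - 1| ≤ |x - x₀| := by
        calc |x - x₀| * |G x - 1| ≤ |x - x₀| * 1 :=
              mul_le_mul_of_nonneg_left h1 (abs_nonneg _)
          _ = |x - x₀| := mul_one _
      have ht0 : 0 < |x - x₀| := lt_of_lt_of_le hM0 hle'
      have h4 : |x - x₀| = |x - x₀| ^ (1 - q) * |x - x₀| ^ q := by
        rw [← Real.rpow_add ht0]
        norm_num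
      have h5 : |x - x₀| ^ (1 - q) ≤ M ^ (1 - q) :=
        Real.rpow_le_rpow_of_nonpos hM0 hle' (by linarith)
      have h6 : |x - x₀| ^ (1 - q) * |x - x₀| ^ q ≤ M ^ (1 - q) * |x - x₀| ^ q :=
        mul_le_mul_of_nonneg_right h5 hqnn
      have h7 : 0 ≤ M * |G x - 1| := mul_nonneg hM0.le (abs_nonneg _)
      linarith [h4 ▸ h3]
  have hRint : Integrable (fun x => M * |G x - 1| + M ^ (1 - q) * |x - x₀| ^ q) μ :=
    (hG1abs_int.const_mul M).add (hint.const_mul _)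
  have step1 : |∫ x, (x - x₀) * (G x - 1) ∂μ| ≤ ∫ x, |(x - x₀) * (G x - 1)| ∂μ := by
    have := norm_integral_le_integral_norm (μ := μ) (f := fun x => (x - x₀) * (G x - 1))
    simpa [Real.norm_eq_abs, abs_mul] using this
  have step2 : (∫ x, |(x - x₀) * (G x - 1)| ∂μ)
      ≤ ∫ x, (M * |G x - 1| + M ^ (1 - q) * |x - x₀| ^ q) ∂μ :=
    integral_mono_ae hprod_int.abs hRint hptw
  have step3 : (∫ x, (M * |G x - 1| + M ^ (1 - q) * |x - x₀| ^ q) ∂μ)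
      = M * (∫ x, |G x - 1| ∂μ) + M ^ (1 - q) * ∫ x, |x - x₀| ^ q ∂μ := by
    rw [integral_add (hG1abs_int.const_mul M) (hint.const_mul _),
      integral_const_mul, integral_const_mul]
  have step4 : M * (∫ x, |G x - 1| ∂μ) + M ^ (1 - q) * (∫ x, |x - x₀| ^ q ∂μ)
      ≤ M * (4 * ε) + M ^ (1 - q) * σ ^ q :=
    add_le_add (mul_le_mul_of_nonneg_left h41 hM0.le)
      (mul_le_mul_of_nonneg_left hmom hMq)
  have numeq : M * (4 * ε) + M ^ (1 - q) * σ ^ q = 5 * σ * ε ^ (1 - 1/q) := by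
    have e0 : ε ^ (-(1/q)) * ε = ε ^ (1 - 1/q) := by
      nth_rewrite 2 [← Real.rpow_one ε]
      rw [← Real.rpow_add hεpos]
      congr 1
      ring
    have e2 : (σ * ε ^ (-(1/q))) ^ (1 - q) * σ ^ q = σ * ε ^ (1 - 1/q) := by
      rw [Real.mul_rpow hσpos.le (Real.rpow_nonneg hε _), ← Real.rpow_mul hε]
      have h1 : -(1/q) * (1 - q) = 1 - 1/q := by
        have hq : (1/q) * q = 1 := one_div_mul_cancel hq0.ne'
        linear_combination hq
      rw [h1, mul_comm (σ ^ (1-q)) _, mul_assoc, ← Real.rpow_add hσpos]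
      have h2 : (1 - q) + q = 1 := by ring
      rw [h2, Real.rpow_one]
      ring
    rw [hM_def]
    calc σ * ε ^ (-(1/q)) * (4*ε) + (σ * ε ^ (-(1/q))) ^ (1 - q) * σ ^ q
        = 4 * (σ * (ε ^ (-(1/q)) * ε)) + (σ * ε ^ (-(1/q))) ^ (1 - q) * σ ^ q := by ring
      _ = 4 * (σ * ε ^ (1 - 1/q)) + σ * ε ^ (1 - 1/q) := by rw [e0, e2]
      _ = 5 * σ * ε ^ (1 - 1/q) := by ring
  have hfinal : |∫ x, (x - x₀) * (G x - 1) ∂μ| ≤ 5 * σ * ε ^ (1 - 1/q) := by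
    calc |∫ x, (x - x₀) * (G x - 1) ∂μ| ≤ _ := step1
      _ ≤ _ := step2
      _ = _ := step3
      _ ≤ M * (4 * ε) + M ^ (1 - q) * σ ^ q := step4
      _ = 5 * σ * ε ^ (1 - 1/q) := numeq
  have : (∫ x, x ∂μ) - (∫ x, x ∂ν) = -(∫ x, (x - x₀) * (G x - 1) ∂μ) := by
    rw [hK]; ring
  rw [this, abs_neg]
  exact hfinal
end

section
/- Let 0 ≤ ε < 1 and let μ be a probability measure on ℝ^d with finite first moment. If μ is (ρ, ε)-resilient in mean (i.e., ‖∫x dμ - ∫x dν‖ ≤ ρ for every probability measure ν ≤ (1-ε)^{-1}μ), then μ is (8ρ, ε)-resilient with respect to the max-sliced 1-Wasserstein distance, i.e., max-SW_1(μ,ν) ≤ 8ρ for every ν ≤ (1-ε)^{-1}μ. Conversely, resilience with respect to max-SW_1 with parameter ρ implies mean resilience with parameter ρ. -/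
open MeasureTheory ENNReal RealInnerProductSpace


/-- The max-sliced 1-Wasserstein distance on `ℝ^d`. -/
noncomputable def maxSW1 {d : ℕ} (μ ν : Measure (EuclideanSpace ℝ (Fin d))) : ℝ≥0∞ :=
  ⨆ θ : Metric.sphere (0 : EuclideanSpace ℝ (Fin d)) 1,
    Wp 1 (μ.map fun x => ⟪(θ : EuclideanSpace ℝ (Fin d)), x⟫)
         (ν.map fun x => ⟪(θ : EuclideanSpace ℝ (Fin d)), x⟫)

section Stmt11Aux

variable {d : ℕ}

local notation "E" => EuclideanSpace ℝ (Fin d)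

lemma aux_meas_f (θ : E) : Measurable (fun x : E => ⟪θ, x⟫) :=
  (innerSL ℝ θ).continuous.measurable

lemma aux_int_f {μ : Measure E} (hμ : Integrable id μ) (θ : E) :
    Integrable (fun x : E => ⟪θ, x⟫) μ :=
  (innerSL ℝ θ).integrable_comp hμ

lemma aux_int_dom {μ m : Measure E} {c : ℝ≥0∞} (hc : c ≠ ∞) (hm : m ≤ c • μ)
    {F : Type*} [NormedAddCommGroup F] {g : E → F} (hg : Integrable g μ) : Integrable g m :=
  (hg.smul_measure hc).mono_measure hm

lemma aux_mean_proj {μ : Measure E} (hμ : Integrable id μ) (θ : E) :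
    ∫ x, ⟪θ, x⟫ ∂μ = ⟪θ, ∫ x, x ∂μ⟫ := by
  simpa using integral_inner hμ θ

lemma aux_c0_ne_zero {ε : ℝ} (hε1 : ε < 1) : (ENNReal.ofReal (1 - ε)) ≠ 0 :=
  (ENNReal.ofReal_pos.2 (by linarith)).ne'

lemma aux_res_proj {ε ρ : ℝ} {μ : Measure E} [IsProbabilityMeasure μ]
    (hμ : Integrable id μ) (hε1 : ε < 1)
    (hres : ∀ ν : Measure E, IsProbabilityMeasure ν → ν ≤ (ENNReal.ofReal (1 - ε))⁻¹ • μ →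
      ‖(∫ x, x ∂μ) - ∫ x, x ∂ν‖ ≤ ρ)
    {θ : E} (hθ : ‖θ‖ = 1)
    (σ : Measure E) (hσp : IsProbabilityMeasure σ)
    (hσ : σ ≤ (ENNReal.ofReal (1 - ε))⁻¹ • μ) :
    |(∫ x, ⟪θ, x⟫ ∂μ) - ∫ x, ⟪θ, x⟫ ∂σ| ≤ ρ := by
  have hσi : Integrable id σ :=
    aux_int_dom (ENNReal.inv_ne_top.2 (aux_c0_ne_zero hε1)) hσ hμ
  have h1 := hres σ hσp hσ
  rw [aux_mean_proj hμ θ, aux_mean_proj hσi θ, ← inner_sub_right]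
  calc |⟪θ, (∫ x, x ∂μ) - ∫ x, x ∂σ⟫| ≤ ‖θ‖ * ‖(∫ x, x ∂μ) - ∫ x, x ∂σ‖ :=
        abs_real_inner_le_norm _ _
    _ ≤ ρ := by rw [hθ, one_mul]; exact h1

/-- L1 : for `τ ≤ μ` of mass at most `ε`, the partial mean is within `ρ` of mass times mean. -/
lemma aux_L1 {ε ρ : ℝ} {μ : Measure E} [IsProbabilityMeasure μ]
    (hμ : Integrable id μ) (hε0 : 0 ≤ ε) (hε1 : ε < 1) (hρ : 0 ≤ ρ)
    (hres : ∀ ν : Measure E, IsProbabilityMeasure ν → ν ≤ (ENNReal.ofReal (1 - ε))⁻¹ • μ →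
      ‖(∫ x, x ∂μ) - ∫ x, x ∂ν‖ ≤ ρ)
    {θ : E} (hθ : ‖θ‖ = 1) (τ : Measure E) (hτle : τ ≤ μ)
    (hτε : τ Set.univ ≤ ENNReal.ofReal ε) :
    |(∫ x, ⟪θ, x⟫ ∂τ) - (τ Set.univ).toReal * ∫ x, ⟪θ, x⟫ ∂μ| ≤ ρ := by
  have hfin : IsFiniteMeasure τ := isFiniteMeasure_of_le μ hτle
  have hc0 : (ENNReal.ofReal (1 - ε)) ≠ 0 := aux_c0_ne_zero hε1
  have hεlt : ENNReal.ofReal ε < 1 := by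
    rw [← ENNReal.ofReal_one]; exact (ENNReal.ofReal_lt_ofReal_iff one_pos).2 hε1
  have htlt1 : τ Set.univ < 1 := lt_of_le_of_lt hτε hεlt
  have htne : τ Set.univ ≠ ∞ := (htlt1.trans one_lt_top).ne
  have hcle : ENNReal.ofReal (1 - ε) ≤ 1 - τ Set.univ := by
    have h1 : ENNReal.ofReal (1 - ε) + ENNReal.ofReal ε = 1 := by
      rw [← ENNReal.ofReal_add (by linarith) hε0]; norm_num
    calc ENNReal.ofReal (1 - ε) = 1 - ENNReal.ofReal ε := by
          rw [← h1, ENNReal.add_sub_cancel_right ENNReal.ofReal_ne_top]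
      _ ≤ 1 - τ Set.univ := tsub_le_tsub_left hτε 1
  have hsub0 : (1 : ℝ≥0∞) - τ Set.univ ≠ 0 :=
    fun h => hc0 (le_antisymm (h ▸ hcle) zero_le)
  have hsubtop : (1 : ℝ≥0∞) - τ Set.univ ≠ ∞ :=
    ne_top_of_le_ne_top one_ne_top tsub_le_self
  set σ : Measure E := ((1 : ℝ≥0∞) - τ Set.univ)⁻¹ • (μ - τ) with hσdef
  have hsubuniv : (μ - τ) Set.univ = 1 - τ Set.univ := by
    rw [Measure.sub_apply MeasurableSet.univ hτle, measure_univ]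
  have hσp : IsProbabilityMeasure σ := ⟨by
    rw [hσdef, Measure.smul_apply, hsubuniv, smul_eq_mul,
      ENNReal.inv_mul_cancel hsub0 hsubtop]⟩
  have hσle : σ ≤ (ENNReal.ofReal (1 - ε))⁻¹ • μ := by
    rw [Measure.le_iff]; intro s hs
    rw [Measure.smul_apply, Measure.smul_apply, smul_eq_mul, smul_eq_mul]
    exact mul_le_mul' (ENNReal.inv_le_inv.2 hcle) (Measure.le_iff'.1 Measure.sub_le s)
  have intf := aux_int_f hμ θ
  have intτ : Integrable (fun x : E => ⟪θ, x⟫) τ := intf.mono_measure hτle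
  have intsub : Integrable (fun x : E => ⟪θ, x⟫) (μ - τ) := intf.mono_measure Measure.sub_le
  have hdec : ∫ x, ⟪θ, x⟫ ∂(μ - τ) = (∫ x, ⟪θ, x⟫ ∂μ) - ∫ x, ⟪θ, x⟫ ∂τ := by
    have := integral_add_measure intsub intτ
    rw [Measure.sub_add_cancel_of_le hτle] at this
    linarith [this]
  set a := ∫ x, ⟪θ, x⟫ ∂μ with ha
  set T := ∫ x, ⟪θ, x⟫ ∂τ with hT
  set t := (τ Set.univ).toReal with ht
  have ht0 : 0 ≤ t := ENNReal.toReal_nonneg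
  have ht1 : t < 1 := by
    have := (ENNReal.toReal_lt_toReal htne one_ne_top).2 htlt1
    simpa using this
  have htoReal : ((1 : ℝ≥0∞) - τ Set.univ).toReal = 1 - t := by
    rw [ENNReal.toReal_sub_of_le htlt1.le one_ne_top]; simp [ht]
  have hσmean : ∫ x, ⟪θ, x⟫ ∂σ = (1 - t)⁻¹ * (a - T) := by
    rw [hσdef, integral_smul_measure, smul_eq_mul, hdec, ENNReal.toReal_inv, htoReal]
  have hρ' := aux_res_proj hμ hε1 hres hθ σ hσp hσle
  rw [hσmean] at hρ'
  have h1t : (0:ℝ) < 1 - t := by linarith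
  have hkey : a - (1 - t)⁻¹ * (a - T) = (T - t * a) / (1 - t) := by
    field_simp
    ring
  rw [hkey] at hρ'
  rw [abs_div, abs_of_pos h1t] at hρ'
  have := (div_le_iff₀ h1t).1 hρ'
  calc |T - t * a| ≤ ρ * (1 - t) := this
    _ ≤ ρ * 1 := by nlinarith
    _ = ρ := mul_one ρ

/-- L1' : for `τ ≤ μ` of mass at least `1 - ε`. -/
lemma aux_L1' {ε ρ : ℝ} {μ : Measure E} [IsProbabilityMeasure μ]
    (hμ : Integrable id μ) (hε1 : ε < 1) (hρ : 0 ≤ ρ)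
    (hres : ∀ ν : Measure E, IsProbabilityMeasure ν → ν ≤ (ENNReal.ofReal (1 - ε))⁻¹ • μ →
      ‖(∫ x, x ∂μ) - ∫ x, x ∂ν‖ ≤ ρ)
    {θ : E} (hθ : ‖θ‖ = 1) (τ : Measure E) (hτle : τ ≤ μ)
    (hτε : ENNReal.ofReal (1 - ε) ≤ τ Set.univ) :
    |(∫ x, ⟪θ, x⟫ ∂τ) - (τ Set.univ).toReal * ∫ x, ⟪θ, x⟫ ∂μ| ≤ ρ := by
  have hfin : IsFiniteMeasure τ := isFiniteMeasure_of_le μ hτle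
  have hc0 : (ENNReal.ofReal (1 - ε)) ≠ 0 := aux_c0_ne_zero hε1
  have ht0' : τ Set.univ ≠ 0 := fun h => hc0 (le_antisymm (h ▸ hτε) zero_le)
  have htle1 : τ Set.univ ≤ 1 := by
    rw [← (measure_univ (μ := μ))]; exact Measure.le_iff'.1 hτle Set.univ
  have htne : τ Set.univ ≠ ∞ := ne_top_of_le_ne_top one_ne_top htle1
  set σ : Measure E := (τ Set.univ)⁻¹ • τ with hσdef
  have hσp : IsProbabilityMeasure σ := ⟨by
    rw [hσdef, Measure.smul_apply, smul_eq_mul, ENNReal.inv_mul_cancel ht0' htne]⟩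
  have hσle : σ ≤ (ENNReal.ofReal (1 - ε))⁻¹ • μ := by
    rw [Measure.le_iff]; intro s hs
    rw [Measure.smul_apply, Measure.smul_apply, smul_eq_mul, smul_eq_mul]
    exact mul_le_mul' (ENNReal.inv_le_inv.2 hτε) (Measure.le_iff'.1 hτle s)
  set a := ∫ x, ⟪θ, x⟫ ∂μ with ha
  set T := ∫ x, ⟪θ, x⟫ ∂τ with hT
  set t := (τ Set.univ).toReal with ht
  have ht0 : 0 < t := ENNReal.toReal_pos ht0' htne
  have ht1 : t ≤ 1 := by
    have := ENNReal.toReal_mono one_ne_top htle1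
    simpa using this
  have hσmean : ∫ x, ⟪θ, x⟫ ∂σ = t⁻¹ * T := by
    rw [hσdef, integral_smul_measure, smul_eq_mul, ENNReal.toReal_inv]
  have hρ' := aux_res_proj hμ hε1 hres hθ σ hσp hσle
  rw [hσmean] at hρ'
  have hkey : a - t⁻¹ * T = -((T - t * a) / t) := by
    field_simp
    ring
  rw [hkey, abs_neg, abs_div, abs_of_pos ht0] at hρ'
  have := (div_le_iff₀ ht0).1 hρ'
  calc |T - t * a| ≤ ρ * t := this
    _ ≤ ρ * 1 := by nlinarith
    _ = ρ := mul_one ρ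


/-- LA (amplification) : for `τ ≤ μ` of mass at most `1 - ε`, with `ε > 0`. -/
lemma aux_LA {ε ρ : ℝ} {μ : Measure E} [IsProbabilityMeasure μ]
    (hμ : Integrable id μ) (hε0' : 0 < ε) (hε1 : ε < 1) (hρ : 0 ≤ ρ)
    (hres : ∀ ν : Measure E, IsProbabilityMeasure ν → ν ≤ (ENNReal.ofReal (1 - ε))⁻¹ • μ →
      ‖(∫ x, x ∂μ) - ∫ x, x ∂ν‖ ≤ ρ)
    {θ : E} (hθ : ‖θ‖ = 1) (τ : Measure E) (hτle : τ ≤ μ)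
    (hτε : τ Set.univ ≤ ENNReal.ofReal (1 - ε)) :
    |(∫ x, ⟪θ, x⟫ ∂τ) - (τ Set.univ).toReal * ∫ x, ⟪θ, x⟫ ∂μ| ≤ ρ * (1 - ε) / ε := by
  have hfin : IsFiniteMeasure τ := isFiniteMeasure_of_le μ hτle
  set c₀ : ℝ≥0∞ := ENNReal.ofReal (1 - ε) with hc₀def
  have hc0 : c₀ ≠ 0 := aux_c0_ne_zero hε1
  have hc0top : c₀ ≠ ∞ := ENNReal.ofReal_ne_top
  have hcE0 : c₀⁻¹ ≠ 0 := ENNReal.inv_ne_zero.2 hc0top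
  have hcEtop : c₀⁻¹ ≠ ∞ := ENNReal.inv_ne_top.2 hc0
  have hc₀lt1 : c₀ < 1 := by
    rw [hc₀def, ← ENNReal.ofReal_one]
    exact (ENNReal.ofReal_lt_ofReal_iff one_pos).2 (by linarith)
  have htlt1 : τ Set.univ < 1 := lt_of_le_of_lt hτε hc₀lt1
  have htne : τ Set.univ ≠ ∞ := (htlt1.trans one_lt_top).ne
  have hsub0 : (1 : ℝ≥0∞) - τ Set.univ ≠ 0 := by
    intro h
    have h2 : (1 : ℝ≥0∞) ≤ τ Set.univ := tsub_eq_zero_iff_le.1 h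
    exact absurd h2 (not_le.2 htlt1)
  have hsubtop : (1 : ℝ≥0∞) - τ Set.univ ≠ ∞ :=
    ne_top_of_le_ne_top one_ne_top tsub_le_self
  have hcEt : c₀⁻¹ * τ Set.univ ≤ 1 := by
    calc c₀⁻¹ * τ Set.univ ≤ c₀⁻¹ * c₀ := mul_le_mul' le_rfl hτε
      _ = 1 := ENNReal.inv_mul_cancel hc0 hc0top
  set k : ℝ≥0∞ := (1 - c₀⁻¹ * τ Set.univ) / (1 - τ Set.univ) with hkdef
  have hkmul : k * (1 - τ Set.univ) = 1 - c₀⁻¹ * τ Set.univ := by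
    rw [hkdef, ENNReal.div_mul_cancel hsub0 hsubtop]
  have hkle : k ≤ c₀⁻¹ := by
    have h1le : (1:ℝ≥0∞) ≤ c₀⁻¹ := ENNReal.one_le_inv.2 ((ENNReal.ofReal_le_one).2 (by linarith))
    have : k * (1 - τ Set.univ) ≤ c₀⁻¹ * (1 - τ Set.univ) := by
      rw [hkmul]
      calc (1:ℝ≥0∞) - c₀⁻¹ * τ Set.univ ≤ c₀⁻¹ - c₀⁻¹ * τ Set.univ := tsub_le_tsub_right h1le _
        _ = c₀⁻¹ * (1 - τ Set.univ) := by
            rw [ENNReal.mul_sub (fun _ _ => hcEtop), mul_one]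
    exact (ENNReal.mul_le_mul_iff_left hsub0 hsubtop).1 this
  have hktop : k ≠ ∞ := ne_top_of_le_ne_top hcEtop hkle
  set σ : Measure E := c₀⁻¹ • τ + k • (μ - τ) with hσdef
  have hsubuniv : (μ - τ) Set.univ = 1 - τ Set.univ := by
    rw [Measure.sub_apply MeasurableSet.univ hτle, measure_univ]
  have hσp : IsProbabilityMeasure σ := ⟨by
    rw [hσdef, Measure.add_apply, Measure.smul_apply, Measure.smul_apply, hsubuniv,
      smul_eq_mul, smul_eq_mul, hkmul]
    exact add_tsub_cancel_of_le hcEt⟩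
  have hσle : σ ≤ c₀⁻¹ • μ := by
    rw [Measure.le_iff]; intro s hs
    rw [Measure.add_apply, Measure.smul_apply, Measure.smul_apply, Measure.smul_apply,
      smul_eq_mul, smul_eq_mul, smul_eq_mul]
    calc c₀⁻¹ * τ s + k * (μ - τ) s ≤ c₀⁻¹ * τ s + c₀⁻¹ * (μ - τ) s := by
          exact add_le_add_right (mul_le_mul' hkle le_rfl) _
      _ = c₀⁻¹ * (τ s + (μ - τ) s) := by rw [mul_add]
      _ = c₀⁻¹ * μ s := by
          rw [Measure.sub_apply hs hτle, add_tsub_cancel_of_le (Measure.le_iff'.1 hτle s)]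
  have intf := aux_int_f hμ θ
  have intτ : Integrable (fun x : E => ⟪θ, x⟫) τ := intf.mono_measure hτle
  have intsub : Integrable (fun x : E => ⟪θ, x⟫) (μ - τ) := intf.mono_measure Measure.sub_le
  have hdec : ∫ x, ⟪θ, x⟫ ∂(μ - τ) = (∫ x, ⟪θ, x⟫ ∂μ) - ∫ x, ⟪θ, x⟫ ∂τ := by
    have := integral_add_measure intsub intτ
    rw [Measure.sub_add_cancel_of_le hτle] at this
    linarith [this]
  set a := ∫ x, ⟪θ, x⟫ ∂μ with ha
  set T := ∫ x, ⟪θ, x⟫ ∂τ with hT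
  set t := (τ Set.univ).toReal with ht
  have ht0 : 0 ≤ t := ENNReal.toReal_nonneg
  have htle : t ≤ 1 - ε := by
    have := ENNReal.toReal_mono hc0top hτε
    rwa [ENNReal.toReal_ofReal (by linarith)] at this
  have ht1 : t < 1 := by linarith
  have h1t : (0:ℝ) < 1 - t := by linarith
  have hcEtoReal : (c₀⁻¹).toReal = (1 - ε)⁻¹ := by
    rw [ENNReal.toReal_inv, hc₀def, ENNReal.toReal_ofReal (by linarith)]
  have hktoReal : k.toReal = (1 - (1 - ε)⁻¹ * t) / (1 - t) := by
    rw [hkdef, ENNReal.toReal_div, ENNReal.toReal_sub_of_le hcEt one_ne_top,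
      ENNReal.toReal_mul, hcEtoReal, ENNReal.toReal_sub_of_le htlt1.le one_ne_top]
    simp [ht]
  have hσmean : ∫ x, ⟪θ, x⟫ ∂σ = (1 - ε)⁻¹ * T + ((1 - (1 - ε)⁻¹ * t) / (1 - t)) * (a - T) := by
    rw [hσdef, integral_add_measure ((intτ.smul_measure hcEtop))
      ((intsub.smul_measure hktop)), integral_smul_measure, integral_smul_measure,
      smul_eq_mul, smul_eq_mul, hdec, hcEtoReal, hktoReal]
  have hρ' := aux_res_proj hμ hε1 hres hθ σ hσp hσle
  rw [hσmean] at hρ'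
  have h1ε : (0:ℝ) < 1 - ε := by linarith
  have hkey : a - ((1 - ε)⁻¹ * T + ((1 - (1 - ε)⁻¹ * t) / (1 - t)) * (a - T))
      = (ε / (1 - ε)) * ((t * a - T) / (1 - t)) := by
    field_simp
    ring
  rw [hkey] at hρ'
  have e1 : |ε / (1 - ε) * ((t * a - T) / (1 - t))| = ε / ((1-ε)*(1-t)) * |t * a - T| := by
    rw [abs_mul, abs_div, abs_div, abs_of_pos hε0', abs_of_pos h1ε, abs_of_pos h1t,
      div_mul_div_comm]
    ring
  rw [e1] at hρ'
  have hpos : (0:ℝ) < ε / ((1-ε) * (1-t)) := by positivity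
  have hA : |t * a - T| ≤ ρ / (ε / ((1-ε)*(1-t))) := (le_div_iff₀' hpos).2 hρ'
  have hsimp : ρ / (ε / ((1-ε)*(1-t))) = ρ * (1-ε) * (1-t) / ε := by
    rw [div_div_eq_mul_div]
    ring
  rw [hsimp] at hA
  calc |T - t * a| = |t * a - T| := abs_sub_comm _ _
    _ ≤ ρ * (1-ε) * (1-t) / ε := hA
    _ ≤ ρ * (1 - ε) / ε := by
        have hnum : ρ * (1-ε) * (1-t) ≤ ρ * (1-ε) := by
          nlinarith [mul_nonneg (mul_nonneg hρ h1ε.le) ht0]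
        gcongr

/-- Sign-splitting: per-set partial-mean control gives a first-absolute-moment bound. -/
lemma aux_split {m : Measure E} [IsFiniteMeasure m] {f : E → ℝ} (hfm : Measurable f)
    (hfi : Integrable f m) {a K : ℝ}
    (h : ∀ S : Set E, MeasurableSet S → |(∫ x in S, f x ∂m) - (m S).toReal * a| ≤ K) :
    ∫ x, |f x - a| ∂m ≤ 2 * K := by
  set S := {x : E | a ≤ f x} with hSdef
  have hS : MeasurableSet S := measurableSet_le measurable_const hfm
  have hfa : Integrable (fun x => f x - a) m := hfi.sub (integrable_const a)
  have hsplit : ∫ x, |f x - a| ∂m =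
      (∫ x in S, |f x - a| ∂m) + ∫ x in Sᶜ, |f x - a| ∂m :=
    (integral_add_compl hS hfa.abs).symm
  have h1 : ∫ x in S, |f x - a| ∂m = (∫ x in S, f x ∂m) - (m S).toReal * a := by
    rw [setIntegral_congr_fun hS (fun x hx => abs_of_nonneg (sub_nonneg.2 hx))]
    rw [integral_sub hfi.integrableOn (integrable_const a).integrableOn,
      setIntegral_const, smul_eq_mul]
    rfl
  have h2 : ∫ x in Sᶜ, |f x - a| ∂m = (m Sᶜ).toReal * a - ∫ x in Sᶜ, f x ∂m := by
    have heq : ∀ x ∈ Sᶜ, |f x - a| = a - f x := by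
      intro x hx
      rw [abs_of_neg]
      · ring
      · simp only [hSdef, Set.mem_compl_iff, Set.mem_setOf_eq, not_le] at hx
        linarith
    rw [setIntegral_congr_fun hS.compl heq,
      integral_sub (integrable_const a).integrableOn hfi.integrableOn,
      setIntegral_const, smul_eq_mul]
    rfl
  rw [hsplit, h1, h2]
  have b1 := h S hS
  have b2 := h Sᶜ hS.compl
  have b1' : (∫ x in S, f x ∂m) - (m S).toReal * a ≤ K := le_trans (le_abs_self _) b1
  have b2' : (m Sᶜ).toReal * a - ∫ x in Sᶜ, f x ∂m ≤ K := by
    rw [abs_sub_comm] at b2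
    exact le_trans (le_abs_self _) b2
  linarith



/-- Moment bound for a sub-measure of `μ` with mass at most `ε`. -/
lemma aux_bound_sub_mu {ε ρ : ℝ} {μ : Measure E} [IsProbabilityMeasure μ]
    (hμ : Integrable id μ) (hε0 : 0 ≤ ε) (hε1 : ε < 1) (hρ : 0 ≤ ρ)
    (hres : ∀ ν : Measure E, IsProbabilityMeasure ν → ν ≤ (ENNReal.ofReal (1 - ε))⁻¹ • μ →
      ‖(∫ x, x ∂μ) - ∫ x, x ∂ν‖ ≤ ρ)
    {θ : E} (hθ : ‖θ‖ = 1) {m : Measure E} (hle : m ≤ μ)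
    (hcase : m Set.univ ≤ ENNReal.ofReal ε ∨ 1/2 ≤ ε) :
    ∫ x, |⟪θ, x⟫ - ∫ y, ⟪θ, y⟫ ∂μ| ∂m ≤ 2 * ρ := by
  have hfin : IsFiniteMeasure m := isFiniteMeasure_of_le μ hle
  have intfm : Integrable (fun x : E => ⟪θ, x⟫) m := (aux_int_f hμ θ).mono_measure hle
  refine aux_split (aux_meas_f θ) intfm ?_
  intro S hS
  have hτle : m.restrict S ≤ μ := le_trans Measure.restrict_le_self hle
  rcases le_or_gt (m S) (ENNReal.ofReal ε) with hmass | hmass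
  · have h := aux_L1 hμ hε0 hε1 hρ hres hθ (m.restrict S) hτle
      (by rw [Measure.restrict_apply_univ]; exact hmass)
    rwa [Measure.restrict_apply_univ] at h
  · rcases hcase with hcase | hcase
    · exact absurd (le_trans (measure_mono (Set.subset_univ S)) hcase) (not_le.2 hmass)
    · have h := aux_L1' hμ hε1 hρ hres hθ (m.restrict S) hτle
        (by rw [Measure.restrict_apply_univ]
            exact le_trans (ENNReal.ofReal_le_ofReal (by linarith)) hmass.le)
      rwa [Measure.restrict_apply_univ] at h

/-- Moment bound for a sub-measure of `ν`, small-`ε` regime. -/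
lemma aux_bound_sub_nu_small {ε ρ : ℝ} {μ ν : Measure E} [IsProbabilityMeasure μ]
    [IsFiniteMeasure ν]
    (hμ : Integrable id μ) (hε0 : 0 ≤ ε) (hε12 : ε ≤ 1/2) (hρ : 0 ≤ ρ)
    (hres : ∀ ν' : Measure E, IsProbabilityMeasure ν' → ν' ≤ (ENNReal.ofReal (1 - ε))⁻¹ • μ →
      ‖(∫ x, x ∂μ) - ∫ x, x ∂ν'‖ ≤ ρ)
    {θ : E} (hθ : ‖θ‖ = 1) (hν' : ENNReal.ofReal (1 - ε) • ν ≤ μ)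
    {m : Measure E} (hmν : m ≤ ν) (hmε : m Set.univ ≤ ENNReal.ofReal ε) :
    ∫ x, |⟪θ, x⟫ - ∫ y, ⟪θ, y⟫ ∂μ| ∂m ≤ 4 * ρ := by
  have hε1 : ε < 1 := by linarith
  have h1ε : (0:ℝ) < 1 - ε := by linarith
  have hfinm : IsFiniteMeasure m := isFiniteMeasure_of_le ν hmν
  have hcEtop : (ENNReal.ofReal (1 - ε))⁻¹ ≠ ∞ := ENNReal.inv_ne_top.2 (aux_c0_ne_zero hε1)
  have hνμ : ν ≤ (ENNReal.ofReal (1 - ε))⁻¹ • μ := by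
    rw [Measure.le_iff]; intro s hs
    rw [Measure.smul_apply, smul_eq_mul]
    have h2 := Measure.le_iff'.1 hν' s
    rw [Measure.smul_apply, smul_eq_mul] at h2
    calc ν s = (ENNReal.ofReal (1 - ε))⁻¹ * (ENNReal.ofReal (1 - ε) * ν s) := by
          rw [← mul_assoc, ENNReal.inv_mul_cancel (aux_c0_ne_zero hε1) ENNReal.ofReal_ne_top,
            one_mul]
      _ ≤ (ENNReal.ofReal (1 - ε))⁻¹ * μ s := mul_le_mul' le_rfl h2
  have intfm : Integrable (fun x : E => ⟪θ, x⟫) m :=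
    ((aux_int_f hμ θ).smul_measure hcEtop).mono_measure (le_trans hmν hνμ)
  have h4 : (4:ℝ) * ρ = 2 * (2 * ρ) := by ring
  rw [h4]
  refine aux_split (aux_meas_f θ) intfm ?_
  intro S hS
  set τ : Measure E := ENNReal.ofReal (1 - ε) • (m.restrict S) with hτdef
  have hτle : τ ≤ μ := by
    rw [Measure.le_iff]; intro s hs
    rw [hτdef, Measure.smul_apply, smul_eq_mul]
    have h2 := Measure.le_iff'.1 hν' s
    rw [Measure.smul_apply, smul_eq_mul] at h2
    calc ENNReal.ofReal (1 - ε) * (m.restrict S) s ≤ ENNReal.ofReal (1 - ε) * ν s :=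
          mul_le_mul' le_rfl (le_trans (Measure.le_iff'.1 Measure.restrict_le_self s)
            (Measure.le_iff'.1 hmν s))
      _ ≤ μ s := h2
  have hτmass : τ Set.univ ≤ ENNReal.ofReal ε := by
    rw [hτdef, Measure.smul_apply, smul_eq_mul, Measure.restrict_apply_univ]
    calc ENNReal.ofReal (1 - ε) * m S ≤ 1 * ENNReal.ofReal ε := by
          exact mul_le_mul' (ENNReal.ofReal_le_one.2 (by linarith))
            (le_trans (measure_mono (Set.subset_univ S)) hmε)
      _ = ENNReal.ofReal ε := one_mul _
  have h := aux_L1 hμ hε0 hε1 hρ hres hθ τ hτle hτmass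
  have hmSne : m S ≠ ∞ := (measure_lt_top m S).ne
  have hτint : ∫ x, ⟪θ, x⟫ ∂τ = (1 - ε) * ∫ x in S, ⟪θ, x⟫ ∂m := by
    rw [hτdef, integral_smul_measure, smul_eq_mul, ENNReal.toReal_ofReal h1ε.le]
  have hτuniv : (τ Set.univ).toReal = (1 - ε) * (m S).toReal := by
    rw [hτdef, Measure.smul_apply, smul_eq_mul, Measure.restrict_apply_univ,
      ENNReal.toReal_mul, ENNReal.toReal_ofReal h1ε.le]
  rw [hτint, hτuniv] at h
  have hfact : (1 - ε) * ∫ x in S, ⟪θ, x⟫ ∂m - (1 - ε) * (m S).toReal * (∫ y, ⟪θ, y⟫ ∂μ)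
      = (1 - ε) * ((∫ x in S, ⟪θ, x⟫ ∂m) - (m S).toReal * ∫ y, ⟪θ, y⟫ ∂μ) := by ring
  rw [hfact, abs_mul, abs_of_pos h1ε] at h
  have h2 : |(∫ x in S, ⟪θ, x⟫ ∂m) - (m S).toReal * ∫ y, ⟪θ, y⟫ ∂μ| ≤ ρ / (1 - ε) :=
    (le_div_iff₀' h1ε).2 h
  refine h2.trans ?_
  rw [div_le_iff₀ h1ε]
  nlinarith

/-- Moment bound for `ν` itself, large-`ε` regime. -/
lemma aux_bound_nu_large {ε ρ : ℝ} {μ ν : Measure E} [IsProbabilityMeasure μ]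
    [IsProbabilityMeasure ν]
    (hμ : Integrable id μ) (hε12 : 1/2 ≤ ε) (hε1 : ε < 1) (hρ : 0 ≤ ρ)
    (hres : ∀ ν' : Measure E, IsProbabilityMeasure ν' → ν' ≤ (ENNReal.ofReal (1 - ε))⁻¹ • μ →
      ‖(∫ x, x ∂μ) - ∫ x, x ∂ν'‖ ≤ ρ)
    {θ : E} (hθ : ‖θ‖ = 1) (hν' : ENNReal.ofReal (1 - ε) • ν ≤ μ) :
    ∫ x, |⟪θ, x⟫ - ∫ y, ⟪θ, y⟫ ∂μ| ∂ν ≤ 4 * ρ := by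
  have hε0' : (0:ℝ) < ε := by linarith
  have h1ε : (0:ℝ) < 1 - ε := by linarith
  have hcEtop : (ENNReal.ofReal (1 - ε))⁻¹ ≠ ∞ := ENNReal.inv_ne_top.2 (aux_c0_ne_zero hε1)
  have hνμ : ν ≤ (ENNReal.ofReal (1 - ε))⁻¹ • μ := by
    rw [Measure.le_iff]; intro s hs
    rw [Measure.smul_apply, smul_eq_mul]
    have h2 := Measure.le_iff'.1 hν' s
    rw [Measure.smul_apply, smul_eq_mul] at h2
    calc ν s = (ENNReal.ofReal (1 - ε))⁻¹ * (ENNReal.ofReal (1 - ε) * ν s) := by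
          rw [← mul_assoc, ENNReal.inv_mul_cancel (aux_c0_ne_zero hε1) ENNReal.ofReal_ne_top,
            one_mul]
      _ ≤ (ENNReal.ofReal (1 - ε))⁻¹ * μ s := mul_le_mul' le_rfl h2
  have intfm : Integrable (fun x : E => ⟪θ, x⟫) ν :=
    ((aux_int_f hμ θ).smul_measure hcEtop).mono_measure hνμ
  have h4 : (4:ℝ) * ρ = 2 * (2 * ρ) := by ring
  rw [h4]
  refine aux_split (aux_meas_f θ) intfm ?_
  intro S hS
  set τ : Measure E := ENNReal.ofReal (1 - ε) • (ν.restrict S) with hτdef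
  have hτle : τ ≤ μ := by
    rw [Measure.le_iff]; intro s hs
    rw [hτdef, Measure.smul_apply, smul_eq_mul]
    have h2 := Measure.le_iff'.1 hν' s
    rw [Measure.smul_apply, smul_eq_mul] at h2
    calc ENNReal.ofReal (1 - ε) * (ν.restrict S) s ≤ ENNReal.ofReal (1 - ε) * ν s :=
          mul_le_mul' le_rfl (Measure.le_iff'.1 Measure.restrict_le_self s)
      _ ≤ μ s := h2
  have hτmass : τ Set.univ ≤ ENNReal.ofReal (1 - ε) := by
    rw [hτdef, Measure.smul_apply, smul_eq_mul, Measure.restrict_apply_univ]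
    calc ENNReal.ofReal (1 - ε) * ν S ≤ ENNReal.ofReal (1 - ε) * 1 :=
          mul_le_mul' le_rfl prob_le_one
      _ = ENNReal.ofReal (1 - ε) := mul_one _
  have h := aux_LA hμ hε0' hε1 hρ hres hθ τ hτle hτmass
  have hτint : ∫ x, ⟪θ, x⟫ ∂τ = (1 - ε) * ∫ x in S, ⟪θ, x⟫ ∂ν := by
    rw [hτdef, integral_smul_measure, smul_eq_mul, ENNReal.toReal_ofReal h1ε.le]
  have hτuniv : (τ Set.univ).toReal = (1 - ε) * (ν S).toReal := by
    rw [hτdef, Measure.smul_apply, smul_eq_mul, Measure.restrict_apply_univ,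
      ENNReal.toReal_mul, ENNReal.toReal_ofReal h1ε.le]
  rw [hτint, hτuniv] at h
  have hfact : (1 - ε) * ∫ x in S, ⟪θ, x⟫ ∂ν - (1 - ε) * (ν S).toReal * (∫ y, ⟪θ, y⟫ ∂μ)
      = (1 - ε) * ((∫ x in S, ⟪θ, x⟫ ∂ν) - (ν S).toReal * ∫ y, ⟪θ, y⟫ ∂μ) := by ring
  rw [hfact, abs_mul, abs_of_pos h1ε] at h
  have h2 : |(∫ x in S, ⟪θ, x⟫ ∂ν) - (ν S).toReal * ∫ y, ⟪θ, y⟫ ∂μ|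
      ≤ ρ * (1 - ε) / ε / (1 - ε) := (le_div_iff₀' h1ε).2 h
  refine h2.trans ?_
  rw [div_le_iff₀ h1ε, div_le_iff₀ hε0']
  nlinarith [mul_nonneg hρ h1ε.le]



lemma aux_cost_meas (a : ℝ) : Measurable fun x : ℝ => (‖x - a‖₊ : ℝ≥0∞) :=
  (measurable_id.sub measurable_const).nnnorm.coe_nnreal_ennreal

lemma aux_cost_fst {m1 m2 : Measure ℝ} [SFinite m1] [SFinite m2] {g : ℝ → ℝ≥0∞}
    (hg : Measurable g) :
    ∫⁻ z : ℝ × ℝ, g z.1 ∂(m1.prod m2) = m2 Set.univ * ∫⁻ x, g x ∂m1 := by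
  rw [← lintegral_map hg measurable_fst, Measure.map_fst_prod, lintegral_smul_measure, smul_eq_mul]

lemma aux_cost_snd {m1 m2 : Measure ℝ} [SFinite m1] [SFinite m2] {g : ℝ → ℝ≥0∞}
    (hg : Measurable g) :
    ∫⁻ z : ℝ × ℝ, g z.2 ∂(m1.prod m2) = m1 Set.univ * ∫⁻ y, g y ∂m2 := by
  rw [← lintegral_map hg measurable_snd, Measure.map_snd_prod, lintegral_smul_measure, smul_eq_mul]

lemma aux_cost_prod_le {m1 m2 : Measure ℝ} [SFinite m1] [SFinite m2] (a : ℝ) :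
    ∫⁻ z : ℝ × ℝ, (‖z.1 - z.2‖₊ : ℝ≥0∞) ∂(m1.prod m2) ≤
      m2 Set.univ * (∫⁻ x, (‖x - a‖₊ : ℝ≥0∞) ∂m1)
        + m1 Set.univ * ∫⁻ y, (‖y - a‖₊ : ℝ≥0∞) ∂m2 := by
  have hptwise : ∀ z : ℝ × ℝ, (‖z.1 - z.2‖₊ : ℝ≥0∞) ≤ (‖z.1 - a‖₊ : ℝ≥0∞) + ‖z.2 - a‖₊ := by
    intro z
    rw [← ENNReal.coe_add, ENNReal.coe_le_coe]
    have heq : z.1 - z.2 = (z.1 - a) - (z.2 - a) := by ring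
    rw [heq]
    exact nnnorm_sub_le _ _
  calc ∫⁻ z : ℝ × ℝ, (‖z.1 - z.2‖₊ : ℝ≥0∞) ∂(m1.prod m2)
      ≤ ∫⁻ z : ℝ × ℝ, ((‖z.1 - a‖₊ : ℝ≥0∞) + ‖z.2 - a‖₊) ∂(m1.prod m2) :=
        lintegral_mono hptwise
    _ = (∫⁻ z : ℝ × ℝ, (‖z.1 - a‖₊ : ℝ≥0∞) ∂(m1.prod m2))
        + ∫⁻ z : ℝ × ℝ, (‖z.2 - a‖₊ : ℝ≥0∞) ∂(m1.prod m2) :=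
        lintegral_add_left ((aux_cost_meas a).comp measurable_fst) _
    _ = _ := by rw [aux_cost_fst (aux_cost_meas a), aux_cost_snd (aux_cost_meas a)]

lemma aux_Wp_le {α β : Measure ℝ} (π : Measure (ℝ × ℝ))
    (h1 : π.map Prod.fst = α) (h2 : π.map Prod.snd = β) {B : ℝ≥0∞}
    (hc : ∫⁻ z : ℝ × ℝ, (‖z.1 - z.2‖₊ : ℝ≥0∞) ∂π ≤ B) :
    Wp 1 α β ≤ B := by
  rw [Wp]
  simp only [one_div, inv_one, ENNReal.rpow_one]
  exact le_trans (iInf₂_le π ⟨h1, h2⟩) hc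

lemma aux_mean_le_Wp {α β : Measure ℝ} [IsProbabilityMeasure α] [IsProbabilityMeasure β]
    (hα : Integrable id α) (hβ : Integrable id β) :
    ENNReal.ofReal |(∫ x, x ∂α) - ∫ x, x ∂β| ≤ Wp 1 α β := by
  rw [Wp]
  simp only [one_div, inv_one, ENNReal.rpow_one]
  refine le_iInf₂ fun π hπ => ?_
  obtain ⟨h1, h2⟩ := hπ
  have hint1 : Integrable (fun z : ℝ × ℝ => z.1) π := by
    have h := (integrable_map_measure aestronglyMeasurable_id
      measurable_fst.aemeasurable (μ := π) (g := id)).1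
    rw [h1] at h
    simpa [Function.comp_def] using h hα
  have hint2 : Integrable (fun z : ℝ × ℝ => z.2) π := by
    have h := (integrable_map_measure aestronglyMeasurable_id
      measurable_snd.aemeasurable (μ := π) (g := id)).1
    rw [h2] at h
    simpa [Function.comp_def] using h hβ
  have hsub : Integrable (fun z : ℝ × ℝ => z.1 - z.2) π := hint1.sub hint2
  have hmean1 : ∫ z : ℝ × ℝ, z.1 ∂π = ∫ x, x ∂α := by
    have h := integral_map (φ := Prod.fst) measurable_fst.aemeasurable
      (aestronglyMeasurable_id (μ := π.map Prod.fst)) (f := id)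
    rw [h1] at h
    simpa using h.symm
  have hmean2 : ∫ z : ℝ × ℝ, z.2 ∂π = ∫ x, x ∂β := by
    have h := integral_map (φ := Prod.snd) measurable_snd.aemeasurable
      (aestronglyMeasurable_id (μ := π.map Prod.snd)) (f := id)
    rw [h2] at h
    simpa using h.symm
  calc ENNReal.ofReal |(∫ x, x ∂α) - ∫ x, x ∂β|
      = ENNReal.ofReal |∫ z : ℝ × ℝ, (z.1 - z.2) ∂π| := by
        rw [integral_sub hint1 hint2, hmean1, hmean2]
    _ ≤ ENNReal.ofReal (∫ z : ℝ × ℝ, |z.1 - z.2| ∂π) :=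
        ENNReal.ofReal_le_ofReal (by
          simpa [Real.norm_eq_abs] using
            norm_integral_le_integral_norm (μ := π) (fun z : ℝ × ℝ => z.1 - z.2))
    _ = ∫⁻ z : ℝ × ℝ, (‖z.1 - z.2‖₊ : ℝ≥0∞) ∂π := by
        simpa [Real.norm_eq_abs, enorm_eq_nnnorm] using ofReal_integral_norm_eq_lintegral_enorm hsub



lemma aux_cost_meas2 : Measurable fun z : ℝ × ℝ => (‖z.1 - z.2‖₊ : ℝ≥0∞) :=
  ((measurable_fst.sub measurable_snd).nnnorm).coe_nnreal_ennreal

/-- Main upper bound, for a fixed direction `θ`. -/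
lemma aux_main_theta {ε ρ : ℝ} {μ ν : Measure E} [IsProbabilityMeasure μ]
    [IsProbabilityMeasure ν]
    (hμ : Integrable id μ) (hε0 : 0 ≤ ε) (hε1 : ε < 1) (hρ : 0 ≤ ρ)
    (hres : ∀ ν' : Measure E, IsProbabilityMeasure ν' → ν' ≤ (ENNReal.ofReal (1 - ε))⁻¹ • μ →
      ‖(∫ x, x ∂μ) - ∫ x, x ∂ν'‖ ≤ ρ)
    (hν : ν ≤ (ENNReal.ofReal (1 - ε))⁻¹ • μ)
    {θ : E} (hθ : ‖θ‖ = 1) :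
    Wp 1 (μ.map fun x => ⟪θ, x⟫) (ν.map fun x => ⟪θ, x⟫) ≤ ENNReal.ofReal (8 * ρ) := by
  have hf : Measurable fun x : E => ⟪θ, x⟫ := aux_meas_f θ
  set f : E → ℝ := fun x => ⟪θ, x⟫ with hfdef
  set a : ℝ := ∫ x, f x ∂μ with hadef
  have hc0 : (ENNReal.ofReal (1 - ε)) ≠ 0 := aux_c0_ne_zero hε1
  have hcEtop : (ENNReal.ofReal (1 - ε))⁻¹ ≠ ∞ := ENNReal.inv_ne_top.2 hc0
  have hν' : ENNReal.ofReal (1 - ε) • ν ≤ μ := by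
    rw [Measure.le_iff]; intro s hs
    have h2 := Measure.le_iff'.1 hν s
    rw [Measure.smul_apply, smul_eq_mul] at h2
    rw [Measure.smul_apply, smul_eq_mul]
    calc ENNReal.ofReal (1 - ε) * ν s ≤ ENNReal.ofReal (1 - ε) *
          ((ENNReal.ofReal (1 - ε))⁻¹ * μ s) := mul_le_mul' le_rfl h2
      _ = μ s := by
          rw [← mul_assoc, ENNReal.mul_inv_cancel hc0 ENNReal.ofReal_ne_top, one_mul]
  have intfμ : Integrable f μ := aux_int_f hμ θ
  have intfν : Integrable f ν := (intfμ.smul_measure hcEtop).mono_measure hν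
  have conv : ∀ (m : Measure E), IsFiniteMeasure m → Integrable f m →
      ∫⁻ x, (‖f x - a‖₊ : ℝ≥0∞) ∂m = ENNReal.ofReal (∫ x, |f x - a| ∂m) := by
    intro m hfinm hint
    haveI := hfinm
    have hint2 : Integrable (fun x => f x - a) m := hint.sub (integrable_const a)
    rw [← (by simpa [enorm_eq_nnnorm] using ofReal_integral_norm_eq_lintegral_enorm hint2 :
      ENNReal.ofReal (∫ x, ‖f x - a‖ ∂m) = ∫⁻ x, (‖f x - a‖₊ : ℝ≥0∞) ∂m)]
    simp [Real.norm_eq_abs]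
  have lmap : ∀ (m : Measure E), ∫⁻ x, (‖x - a‖₊ : ℝ≥0∞) ∂(m.map f)
      = ∫⁻ x, (‖f x - a‖₊ : ℝ≥0∞) ∂m := fun m => lintegral_map (aux_cost_meas a) hf
  have h68 : ENNReal.ofReal (2 * ρ) + ENNReal.ofReal (4 * ρ) ≤ ENNReal.ofReal (8 * ρ) := by
    rw [← ENNReal.ofReal_add (by linarith) (by linarith)]
    exact ENNReal.ofReal_le_ofReal (by linarith)
  rcases le_or_gt ε (1/2) with h12 | h12
  -- small ε : residual coupling
  · set γm : Measure E := μ ⊓ ν with hγdef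
    have hγμ : γm ≤ μ := inf_le_left
    have hγν : γm ≤ ν := inf_le_right
    haveI : IsFiniteMeasure γm := isFiniteMeasure_of_le μ hγμ
    set μr : Measure E := μ - γm with hμrdef
    set νr : Measure E := ν - γm with hνrdef
    have hμr_le : μr ≤ μ := Measure.sub_le
    have hνr_le : νr ≤ ν := Measure.sub_le
    haveI : IsFiniteMeasure μr := isFiniteMeasure_of_le μ hμr_le
    haveI : IsFiniteMeasure νr := isFiniteMeasure_of_le ν hνr_le
    have hμdec : μr + γm = μ := Measure.sub_add_cancel_of_le hγμ
    have hνdec : νr + γm = ν := Measure.sub_add_cancel_of_le hγν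
    have hγlb : ENNReal.ofReal (1 - ε) • ν ≤ γm := by
      refine le_inf hν' ?_
      rw [Measure.le_iff]; intro s hs
      rw [Measure.smul_apply, smul_eq_mul]
      calc ENNReal.ofReal (1 - ε) * ν s ≤ 1 * ν s :=
            mul_le_mul' (ENNReal.ofReal_le_one.2 (by linarith)) le_rfl
        _ = ν s := one_mul _
    have hνr_mass : νr Set.univ ≤ ENNReal.ofReal ε := by
      have h3 : νr Set.univ = 1 - γm Set.univ := by
        rw [hνrdef, Measure.sub_apply MeasurableSet.univ hγν, measure_univ (μ := ν)]
      have h4 : ENNReal.ofReal (1 - ε) ≤ γm Set.univ := by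
        have := Measure.le_iff'.1 hγlb Set.univ
        rwa [Measure.smul_apply, smul_eq_mul, measure_univ, mul_one] at this
      rw [h3]
      calc (1 : ℝ≥0∞) - γm Set.univ ≤ 1 - ENNReal.ofReal (1 - ε) := tsub_le_tsub_left h4 1
        _ = ENNReal.ofReal ε := by
            have h1 : ENNReal.ofReal (1 - ε) + ENNReal.ofReal ε = 1 := by
              rw [← ENNReal.ofReal_add (by linarith) hε0]; norm_num
            rw [← h1, ENNReal.add_sub_cancel_left ENNReal.ofReal_ne_top]
    have hmass_eq : μr Set.univ = νr Set.univ := by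
      rw [hμrdef, hνrdef, Measure.sub_apply MeasurableSet.univ hγμ,
        Measure.sub_apply MeasurableSet.univ hγν, measure_univ (μ := μ), measure_univ (μ := ν)]
    have hμr_mass : μr Set.univ ≤ ENNReal.ofReal ε := hmass_eq ▸ hνr_mass
    set m : ℝ≥0∞ := μr Set.univ with hmdef
    have hmtop : m ≠ ∞ := ne_top_of_le_ne_top ENNReal.ofReal_ne_top hμr_mass
    set αc : Measure ℝ := γm.map f with hαcdef
    set αr : Measure ℝ := μr.map f with hαrdef
    set βr : Measure ℝ := νr.map f with hβrdef
    have hαdec : μ.map f = αr + αc := by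
      rw [hαrdef, hαcdef, ← Measure.map_add _ _ hf, hμdec]
    have hβdec : ν.map f = βr + αc := by
      rw [hβrdef, hαcdef, ← Measure.map_add _ _ hf, hνdec]
    have hαr_univ : αr Set.univ = m := by
      rw [hαrdef, Measure.map_apply hf MeasurableSet.univ, Set.preimage_univ]
    have hβr_univ : βr Set.univ = m := by
      rw [hβrdef, Measure.map_apply hf MeasurableSet.univ, Set.preimage_univ, ← hmass_eq]
    haveI : IsFiniteMeasure αr := ⟨by rw [hαr_univ]; exact hmtop.lt_top⟩
    haveI : IsFiniteMeasure βr := ⟨by rw [hβr_univ]; exact hmtop.lt_top⟩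
    have hdiag_meas : Measurable fun x : ℝ => (x, x) := measurable_id.prodMk measurable_id
    set π : Measure (ℝ × ℝ) := αc.map (fun x => (x, x)) + m⁻¹ • (αr.prod βr) with hπdef
    have hcompfst : (Prod.fst ∘ fun x : ℝ => (x, x)) = id := rfl
    have hcompsnd : (Prod.snd ∘ fun x : ℝ => (x, x)) = id := rfl
    have hres_zero : m = 0 → αr = 0 ∧ βr = 0 := by
      intro hm0
      have h5 : μr = 0 := Measure.measure_univ_eq_zero.1 hm0
      have h6 : νr = 0 := Measure.measure_univ_eq_zero.1 (hmass_eq ▸ hm0)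
      constructor
      · rw [hαrdef, h5, Measure.map_zero]
      · rw [hβrdef, h6, Measure.map_zero]
    have h1 : π.map Prod.fst = μ.map f := by
      rw [hπdef, Measure.map_add _ _ measurable_fst, Measure.map_smul,
        Measure.map_map measurable_fst hdiag_meas, hcompfst, Measure.map_id,
        Measure.map_fst_prod, hβr_univ, hαdec]
      rcases eq_or_ne m 0 with hm0 | hm0
      · rcases hres_zero hm0 with ⟨hα0, _⟩
        rw [hα0]; simp
      · rw [smul_smul, ENNReal.inv_mul_cancel hm0 hmtop, one_smul, add_comm]
    have h2 : π.map Prod.snd = ν.map f := by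
      rw [hπdef, Measure.map_add _ _ measurable_snd, Measure.map_smul,
        Measure.map_map measurable_snd hdiag_meas, hcompsnd, Measure.map_id,
        Measure.map_snd_prod, hαr_univ, hβdec]
      rcases eq_or_ne m 0 with hm0 | hm0
      · rcases hres_zero hm0 with ⟨_, hβ0⟩
        rw [hβ0]; simp
      · rw [smul_smul, ENNReal.inv_mul_cancel hm0 hmtop, one_smul, add_comm]
    refine aux_Wp_le π h1 h2 ?_
    have hdiag0 : ∫⁻ z : ℝ × ℝ, (‖z.1 - z.2‖₊ : ℝ≥0∞) ∂(αc.map fun x => (x, x)) = 0 := by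
      rw [lintegral_map aux_cost_meas2 hdiag_meas]
      simp
    have intfμr : Integrable f μr := intfμ.mono_measure hμr_le
    have intfνr : Integrable f νr := intfν.mono_measure hνr_le
    have hIαr : ∫⁻ x, (‖x - a‖₊ : ℝ≥0∞) ∂αr ≤ ENNReal.ofReal (2 * ρ) := by
      rw [hαrdef, lmap μr, conv μr inferInstance intfμr]
      exact ENNReal.ofReal_le_ofReal
        (aux_bound_sub_mu hμ hε0 hε1 hρ hres hθ hμr_le (Or.inl hμr_mass))
    have hIβr : ∫⁻ y, (‖y - a‖₊ : ℝ≥0∞) ∂βr ≤ ENNReal.ofReal (4 * ρ) := by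
      rw [hβrdef, lmap νr, conv νr inferInstance intfνr]
      exact ENNReal.ofReal_le_ofReal
        (aux_bound_sub_nu_small hμ hε0 h12 hρ hres hθ hν' hνr_le hνr_mass)
    calc ∫⁻ z : ℝ × ℝ, (‖z.1 - z.2‖₊ : ℝ≥0∞) ∂π
        = (∫⁻ z : ℝ × ℝ, (‖z.1 - z.2‖₊ : ℝ≥0∞) ∂(αc.map fun x => (x, x)))
          + m⁻¹ * ∫⁻ z : ℝ × ℝ, (‖z.1 - z.2‖₊ : ℝ≥0∞) ∂(αr.prod βr) := by
          rw [hπdef, lintegral_add_measure, lintegral_smul_measure, smul_eq_mul]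
      _ = m⁻¹ * ∫⁻ z : ℝ × ℝ, (‖z.1 - z.2‖₊ : ℝ≥0∞) ∂(αr.prod βr) := by
          rw [hdiag0, zero_add]
      _ ≤ m⁻¹ * (m * (∫⁻ x, (‖x - a‖₊ : ℝ≥0∞) ∂αr) + m * ∫⁻ y, (‖y - a‖₊ : ℝ≥0∞) ∂βr) := by
          refine mul_le_mul' le_rfl ?_
          have := aux_cost_prod_le (m1 := αr) (m2 := βr) a
          rwa [hαr_univ, hβr_univ] at this
      _ = (m⁻¹ * m) * ((∫⁻ x, (‖x - a‖₊ : ℝ≥0∞) ∂αr) + ∫⁻ y, (‖y - a‖₊ : ℝ≥0∞) ∂βr) := by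
          ring
      _ ≤ 1 * ((∫⁻ x, (‖x - a‖₊ : ℝ≥0∞) ∂αr) + ∫⁻ y, (‖y - a‖₊ : ℝ≥0∞) ∂βr) := by
          refine mul_le_mul' ?_ le_rfl
          rcases eq_or_ne m 0 with hm0 | hm0
          · rw [hm0]; simp
          · rw [ENNReal.inv_mul_cancel hm0 hmtop]
      _ = (∫⁻ x, (‖x - a‖₊ : ℝ≥0∞) ∂αr) + ∫⁻ y, (‖y - a‖₊ : ℝ≥0∞) ∂βr := one_mul _
      _ ≤ ENNReal.ofReal (2 * ρ) + ENNReal.ofReal (4 * ρ) := add_le_add hIαr hIβr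
      _ ≤ ENNReal.ofReal (8 * ρ) := h68
  -- large ε : product coupling
  · haveI hprobα : IsProbabilityMeasure (μ.map f) := Measure.isProbabilityMeasure_map hf.aemeasurable
    haveI hprobβ : IsProbabilityMeasure (ν.map f) := Measure.isProbabilityMeasure_map hf.aemeasurable
    set π : Measure (ℝ × ℝ) := (μ.map f).prod (ν.map f) with hπdef
    have h1 : π.map Prod.fst = μ.map f := by
      rw [hπdef, Measure.map_fst_prod, measure_univ, one_smul]
    have h2 : π.map Prod.snd = ν.map f := by
      rw [hπdef, Measure.map_snd_prod, measure_univ, one_smul]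
    refine aux_Wp_le π h1 h2 ?_
    have hIα : ∫⁻ x, (‖x - a‖₊ : ℝ≥0∞) ∂(μ.map f) ≤ ENNReal.ofReal (2 * ρ) := by
      rw [lmap μ, conv μ inferInstance intfμ]
      exact ENNReal.ofReal_le_ofReal
        (aux_bound_sub_mu hμ hε0 hε1 hρ hres hθ le_rfl (Or.inr h12.le))
    have hIβ : ∫⁻ y, (‖y - a‖₊ : ℝ≥0∞) ∂(ν.map f) ≤ ENNReal.ofReal (4 * ρ) := by
      rw [lmap ν, conv ν inferInstance intfν]
      exact ENNReal.ofReal_le_ofReal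
        (aux_bound_nu_large hμ h12.le hε1 hρ hres hθ hν')
    calc ∫⁻ z : ℝ × ℝ, (‖z.1 - z.2‖₊ : ℝ≥0∞) ∂π
        ≤ (ν.map f) Set.univ * (∫⁻ x, (‖x - a‖₊ : ℝ≥0∞) ∂(μ.map f))
          + (μ.map f) Set.univ * ∫⁻ y, (‖y - a‖₊ : ℝ≥0∞) ∂(ν.map f) := by
          rw [hπdef]; exact aux_cost_prod_le a
      _ = (∫⁻ x, (‖x - a‖₊ : ℝ≥0∞) ∂(μ.map f)) + ∫⁻ y, (‖y - a‖₊ : ℝ≥0∞) ∂(ν.map f) := by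
          rw [measure_univ, measure_univ, one_mul, one_mul]
      _ ≤ ENNReal.ofReal (2 * ρ) + ENNReal.ofReal (4 * ρ) := add_le_add hIα hIβ
      _ ≤ ENNReal.ofReal (8 * ρ) := h68


end Stmt11Aux

/-- If `μ` is `(ρ, ε)`-resilient in mean, then `μ` is `(8ρ, ε)`-resilient with respect to
the max-sliced 1-Wasserstein distance; conversely, `(ρ, ε)`-resilience w.r.t. `max-SW_1`
implies `(ρ, ε)`-resilience in mean. -/
theorem stmt11 {d : ℕ} (ε ρ : ℝ) (hε0 : 0 ≤ ε) (hε1 : ε < 1) (hρ : 0 ≤ ρ)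
    (μ : Measure (EuclideanSpace ℝ (Fin d))) [IsProbabilityMeasure μ]
    (hμ : Integrable id μ) :
    ((∀ ν : Measure (EuclideanSpace ℝ (Fin d)), IsProbabilityMeasure ν →
        ν ≤ (ENNReal.ofReal (1 - ε))⁻¹ • μ → ‖(∫ x, x ∂μ) - ∫ x, x ∂ν‖ ≤ ρ) →
      ∀ ν : Measure (EuclideanSpace ℝ (Fin d)), IsProbabilityMeasure ν →
        ν ≤ (ENNReal.ofReal (1 - ε))⁻¹ • μ → maxSW1 μ ν ≤ ENNReal.ofReal (8 * ρ)) ∧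
    ((∀ ν : Measure (EuclideanSpace ℝ (Fin d)), IsProbabilityMeasure ν →
        ν ≤ (ENNReal.ofReal (1 - ε))⁻¹ • μ → maxSW1 μ ν ≤ ENNReal.ofReal ρ) →
      ∀ ν : Measure (EuclideanSpace ℝ (Fin d)), IsProbabilityMeasure ν →
        ν ≤ (ENNReal.ofReal (1 - ε))⁻¹ • μ → ‖(∫ x, x ∂μ) - ∫ x, x ∂ν‖ ≤ ρ) := by
  have hc0 : (ENNReal.ofReal (1 - ε)) ≠ 0 := aux_c0_ne_zero hε1
  have hcEtop : (ENNReal.ofReal (1 - ε))⁻¹ ≠ ∞ := ENNReal.inv_ne_top.2 hc0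
  constructor
  · intro hres ν hνp hν
    haveI := hνp
    rw [maxSW1]
    refine iSup_le fun θs => ?_
    have hθ : ‖(θs : EuclideanSpace ℝ (Fin d))‖ = 1 := by
      have h := θs.2
      rwa [mem_sphere_zero_iff_norm] at h
    exact aux_main_theta hμ hε0 hε1 hρ hres hν hθ
  · intro hW ν hνp hν
    haveI := hνp
    have hνint : Integrable id ν := aux_int_dom hcEtop hν hμ
    rcases eq_or_ne ((∫ x, x ∂μ) - ∫ x, x ∂ν) 0 with hu0 | hu0
    · rw [hu0, norm_zero]; exact hρ
    · set u : EuclideanSpace ℝ (Fin d) := (∫ x, x ∂μ) - ∫ x, x ∂ν with hu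
      set θ : EuclideanSpace ℝ (Fin d) := ‖u‖⁻¹ • u with hθdef
      have hun0 : ‖u‖ ≠ 0 := norm_ne_zero_iff.2 hu0
      have hθn : ‖θ‖ = 1 := by
        rw [hθdef, norm_smul, norm_inv, norm_norm, inv_mul_cancel₀ hun0]
      have hmem : θ ∈ Metric.sphere (0 : EuclideanSpace ℝ (Fin d)) 1 := by
        rw [mem_sphere_zero_iff_norm]; exact hθn
      have hf : Measurable fun x : EuclideanSpace ℝ (Fin d) => ⟪θ, x⟫ := aux_meas_f θ
      have hle1 : Wp 1 (μ.map fun x => ⟪θ, x⟫) (ν.map fun x => ⟪θ, x⟫)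
          ≤ ENNReal.ofReal ρ := by
        have hsup := hW ν hνp hν
        rw [maxSW1] at hsup
        exact le_trans
          (le_iSup (fun θs : Metric.sphere (0 : EuclideanSpace ℝ (Fin d)) 1 =>
            Wp 1 (μ.map fun x => ⟪(θs : EuclideanSpace ℝ (Fin d)), x⟫)
              (ν.map fun x => ⟪(θs : EuclideanSpace ℝ (Fin d)), x⟫)) ⟨θ, hmem⟩) hsup
      haveI hpα : IsProbabilityMeasure (μ.map fun x => ⟪θ, x⟫) :=
        Measure.isProbabilityMeasure_map hf.aemeasurable
      haveI hpβ : IsProbabilityMeasure (ν.map fun x => ⟪θ, x⟫) :=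
        Measure.isProbabilityMeasure_map hf.aemeasurable
      have hintα : Integrable id (μ.map fun x => ⟪θ, x⟫) := by
        rw [integrable_map_measure aestronglyMeasurable_id hf.aemeasurable]
        simpa [Function.comp_def] using aux_int_f hμ θ
      have hintβ : Integrable id (ν.map fun x => ⟪θ, x⟫) := by
        rw [integrable_map_measure aestronglyMeasurable_id hf.aemeasurable]
        simpa [Function.comp_def] using aux_int_f hνint θ
      have hmα : ∫ x, x ∂(μ.map fun x => ⟪θ, x⟫) = ⟪θ, ∫ x, x ∂μ⟫ := by
        rw [← aux_mean_proj hμ θ]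
        exact integral_map hf.aemeasurable aestronglyMeasurable_id
      have hmβ : ∫ x, x ∂(ν.map fun x => ⟪θ, x⟫) = ⟪θ, ∫ x, x ∂ν⟫ := by
        rw [← aux_mean_proj hνint θ]
        exact integral_map hf.aemeasurable aestronglyMeasurable_id
      have hinner : (∫ x, x ∂(μ.map fun x => ⟪θ, x⟫)) - ∫ x, x ∂(ν.map fun x => ⟪θ, x⟫)
          = ‖u‖ := by
        rw [hmα, hmβ, ← inner_sub_right, ← hu, hθdef, real_inner_smul_left,
          real_inner_self_eq_norm_sq]
        field_simp
      have hlow := aux_mean_le_Wp hintα hintβ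
      rw [hinner, abs_of_nonneg (norm_nonneg u)] at hlow
      have hfinal : ENNReal.ofReal ‖u‖ ≤ ENNReal.ofReal ρ := le_trans hlow hle1
      exact (ENNReal.ofReal_le_ofReal_iff hρ).1 hfinal
end
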